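/- arXiv:1902.08926 — 13 statements merged into one kernel-verified Lean document; each statement's English description precedes it below -/
import Mathlib

section
/- Comparison principle for the finite-horizon Hamilton–Jacobi equation: let r ≥ 0, T ∈ ℝ, t′ < T, and let v = (v_i)_{i∈I} and w = (w_i)_{i∈I} be continuously differentiable functions on [t′, T] such that for all (i,t) ∈ I × [t′,T]: (d/dt)v_i(t) − r v_i(t) + H(i, (v_j(t) − v_i(t))_{j∈V(i)}) ≥ 0 and (d/dt)w_i(t) − r w_i(t) + H(i, (w_j(t) − w_i(t))_{j∈V(i)}) ≤ 0, and such that v_i(T) ≤ w_i(T) for all i ∈ I. Then v_i(t) ≤ w_i(t) for all (i,t) ∈ I × [t′, T]. -/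
open Set Filter Topology

/-- Comparison principle for the finite-horizon Hamilton–Jacobi equation on a
graph: if `v` is a (continuously differentiable) subsolution and `w` a supersolution on
`[t', T]` with `v_i(T) ≤ w_i(T)` for all `i`, then `v_i(t) ≤ w_i(t)` on `[t', T]`. -/
theorem comparison_principle_finite_horizon
    (N : ℕ) (V : Fin N → Finset (Fin N)) (hV : ∀ i, i ∉ V i)
    (H : (i : Fin N) → (↥(V i) → ℝ) → ℝ)
    (hmono : ∀ (i : Fin N) (p p' : ↥(V i) → ℝ), (∀ j, p' j ≤ p j) → H i p' ≤ H i p)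
    (r : ℝ) (hr : 0 ≤ r) (T t' : ℝ) (ht' : t' < T)
    (v w v' w' : Fin N → ℝ → ℝ)
    (hv : ∀ i, ∀ t ∈ Icc t' T, HasDerivWithinAt (v i) (v' i t) (Icc t' T) t)
    (hv'c : ∀ i, ContinuousOn (v' i) (Icc t' T))
    (hw : ∀ i, ∀ t ∈ Icc t' T, HasDerivWithinAt (w i) (w' i t) (Icc t' T) t)
    (hw'c : ∀ i, ContinuousOn (w' i) (Icc t' T))
    (hsub : ∀ i, ∀ t ∈ Icc t' T,
      0 ≤ v' i t - r * v i t + H i (fun j => v j.1 t - v i t))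
    (hsup : ∀ i, ∀ t ∈ Icc t' T,
      w' i t - r * w i t + H i (fun j => w j.1 t - w i t) ≤ 0)
    (hterm : ∀ i, v i T ≤ w i T) :
    ∀ i, ∀ t ∈ Icc t' T, v i t ≤ w i t := by
  intro i t ht
  have key : ∀ ε > (0:ℝ), v i t - w i t ≤ ε * (Real.exp (r*t) * (T - t)) := by
    intro ε hε
    set g : Fin N → ℝ → ℝ := fun j s => Real.exp (-(r*s)) * (v j s - w j s) + ε * s with hgdef
    have hNe : (Finset.univ : Finset (Fin N)).Nonempty := ⟨i, Finset.mem_univ i⟩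
    set m : ℝ → ℝ := fun s => Finset.univ.sup' hNe (fun j => g j s) with hmdef
    have hgc : ∀ j, ContinuousOn (g j) (Icc t' T) := by
      intro j
      have hvc : ContinuousOn (v j) (Icc t' T) := fun x hx => (hv j x hx).continuousWithinAt
      have hwc : ContinuousOn (w j) (Icc t' T) := fun x hx => (hw j x hx).continuousWithinAt
      exact (((Real.continuous_exp.comp ((continuous_const.mul continuous_id).neg)).continuousOn).mul
        (hvc.sub hwc)).add (continuous_const.mul continuous_id).continuousOn
    have hmc : ContinuousOn m (Icc t' T) :=
      ContinuousOn.finset_sup'_apply hNe (fun j _ => hgc j)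
    obtain ⟨t₀, ht₀, hmax⟩ :=
      isCompact_Icc.exists_isMaxOn ⟨T, right_mem_Icc.2 ht'.le⟩ hmc
    obtain ⟨i₀, -, hi₀⟩ := Finset.exists_mem_eq_sup' hNe (fun j => g j t₀)
    have hderiv : ∀ j, ∀ s ∈ Icc t' T, HasDerivWithinAt (g j)
        (Real.exp (-(r*s)) * ((v' j s - w' j s) - r * (v j s - w j s)) + ε) (Icc t' T) s := by
      intro j s hs
      have he : HasDerivAt (fun y => Real.exp (-(r*y))) (Real.exp (-(r*s)) * (-r)) s := by
        simpa using (((hasDerivAt_id s).const_mul r).neg).exp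
      have h1 := (he.hasDerivWithinAt (s := Icc t' T)).mul ((hv j s hs).sub (hw j s hs))
      have h2 := h1.add ((hasDerivWithinAt_id s (Icc t' T)).const_mul ε)
      refine HasDerivWithinAt.congr_deriv h2 ?_
      simp only [Pi.sub_apply]
      ring
    rcases eq_or_lt_of_le ht₀.2 with hT | hT
    · -- max at T
      have h1 : g i t ≤ m t := Finset.le_sup' (fun j => g j t) (Finset.mem_univ i)
      have h2 : m t ≤ m t₀ := hmax ht
      have h3 : g i₀ t₀ ≤ ε * T := by
        rw [hT]
        simp only [hgdef]
        nlinarith [mul_nonpos_of_nonneg_of_nonpos (Real.exp_pos (-(r*T))).le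
          (sub_nonpos.2 (hterm i₀))]
      have h4 : g i t ≤ ε * T := by
        calc g i t ≤ m t := h1
        _ ≤ m t₀ := h2
        _ = g i₀ t₀ := hi₀
        _ ≤ ε * T := h3
      have hE : Real.exp (r*t) * Real.exp (-(r*t)) = 1 := by
        rw [← Real.exp_add]; simp
      have hEp := Real.exp_pos (r*t)
      have h5 : Real.exp (-(r*t)) * (v i t - w i t) ≤ ε * (T - t) := by
        simp only [hgdef] at h4; linarith
      have h6 : v i t - w i t = Real.exp (r*t) * (Real.exp (-(r*t)) * (v i t - w i t)) := by
        rw [← mul_assoc, hE, one_mul]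
      rw [h6]
      exact le_trans (mul_le_mul_of_nonneg_left h5 hEp.le) (le_of_eq (by ring))
    · -- t₀ < T : contradiction
      exfalso
      have hHle : H i₀ (fun j => v j.1 t₀ - v i₀ t₀) ≤ H i₀ (fun j => w j.1 t₀ - w i₀ t₀) := by
        apply hmono
        intro j
        have hj : g j.1 t₀ ≤ g i₀ t₀ := by
          rw [← hi₀]; exact Finset.le_sup' (fun k => g k t₀) (Finset.mem_univ j.1)
        simp only [hgdef] at hj
        nlinarith [Real.exp_pos (-(r*t₀))]
      have hge : 0 ≤ (v' i₀ t₀ - w' i₀ t₀) - r * (v i₀ t₀ - w i₀ t₀) := by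
        have h1 := hsub i₀ t₀ ht₀
        have h2 := hsup i₀ t₀ ht₀
        linarith
      have hmaxon : IsMaxOn (g i₀) (Icc t₀ T) t₀ := by
        intro x hx
        have hx' : x ∈ Icc t' T := ⟨ht₀.1.trans hx.1, hx.2⟩
        calc g i₀ x ≤ m x := Finset.le_sup' (fun k => g k x) (Finset.mem_univ i₀)
        _ ≤ m t₀ := hmax hx'
        _ = g i₀ t₀ := hi₀
      have hd : HasDerivWithinAt (g i₀)
          (Real.exp (-(r*t₀)) * ((v' i₀ t₀ - w' i₀ t₀) - r * (v i₀ t₀ - w i₀ t₀)) + ε)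
          (Icc t₀ T) t₀ :=
        (hderiv i₀ t₀ ht₀).mono (Icc_subset_Icc ht₀.1 le_rfl)
      have htan : (T - t₀) ∈ posTangentConeAt (Icc t₀ T) t₀ := by
        apply sub_mem_posTangentConeAt_of_segment_subset
        rw [segment_eq_Icc hT.le]
      have hnp := hmaxon.localize.hasFDerivWithinAt_nonpos hd.hasFDerivWithinAt htan
      simp only [ContinuousLinearMap.toSpanSingleton_apply, ContinuousLinearMap.smulRight_apply, ContinuousLinearMap.one_apply,
        smul_eq_mul] at hnp
      have hpos : 0 < Real.exp (-(r*t₀)) * ((v' i₀ t₀ - w' i₀ t₀) - r * (v i₀ t₀ - w i₀ t₀)) + ε :=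
        add_pos_of_nonneg_of_pos (mul_nonneg (Real.exp_pos _).le hge) hε
      exact absurd hnp (not_le.2 (mul_pos (sub_pos.2 hT) hpos))
  by_contra hlt
  push_neg at hlt
  have hC : 0 ≤ Real.exp (r*t) * (T - t) :=
    mul_nonneg (Real.exp_pos _).le (sub_nonneg.2 ht.2)
  set C := Real.exp (r*t) * (T - t) with hCdef
  have hkey := key ((v i t - w i t)/(C+1)) (div_pos (sub_pos.2 hlt) (by linarith))
  rw [div_mul_eq_mul_div, le_div_iff₀ (by linarith)] at hkey
  nlinarith [sub_pos.2 hlt]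
end

section
/- Global existence and uniqueness for the Hamilton–Jacobi equation on a graph: let r ≥ 0, T ∈ ℝ, and g : I → ℝ. There exists a unique continuously differentiable function V = (V_i)_{i∈I} on (−∞, T] satisfying, for all (i,t) ∈ I × (−∞,T], (d/dt)V_i(t) − r V_i(t) + H(i, (V_j(t) − V_i(t))_{j∈V(i)}) = 0, together with the terminal condition V_i(T) = g(i) for all i ∈ I. -/
open Set Filter Topology

lemma exists_lipschitzOnWith_of_isCompact {E F : Type*} [MetricSpace E] [MetricSpace F]
    {f : E → F} (hf : LocallyLipschitz f) {s : Set E} (hs : IsCompact s) :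
    ∃ K : NNReal, LipschitzOnWith K f s := by
  obtain ⟨C, hC⟩ := Metric.isBounded_iff.mp (hs.image hf.continuous).isBounded
  choose Kf t ht hK using hf
  obtain ⟨F0, -, hF0⟩ := hs.elim_nhds_subcover (fun x => interior (t x))
    (fun x _ => interior_mem_nhds.mpr (ht x))
  obtain ⟨δ, hδ, hcov⟩ := lebesgue_number_lemma_of_metric (c := fun x : F0 => interior (t x.1)) hs
    (fun _ => isOpen_interior) (fun x hx => by
      obtain ⟨z, hz, hmem⟩ := mem_iUnion₂.mp (hF0 hx)
      exact mem_iUnion.mpr ⟨⟨z, hz⟩, hmem⟩)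
  set K0 : NNReal := F0.sup Kf with hK0
  set Q : NNReal := Real.toNNReal C / Real.toNNReal δ with hQ
  refine ⟨K0 + Q, lipschitzOnWith_iff_dist_le_mul.mpr fun x hx y hy => ?_⟩
  rcases lt_or_ge (dist x y) δ with hxy | hxy
  · obtain ⟨z, hz⟩ := hcov x hx
    have hxz : x ∈ t z.1 := interior_subset (hz (Metric.mem_ball_self hδ))
    have hyz : y ∈ t z.1 := interior_subset (hz (by simpa [Metric.mem_ball, dist_comm] using hxy))
    calc dist (f x) (f y) ≤ (Kf z.1 : ℝ) * dist x y := (hK z.1).dist_le_mul x hxz y hyz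
      _ ≤ ((K0 + Q : NNReal) : ℝ) * dist x y := by
          apply mul_le_mul_of_nonneg_right _ dist_nonneg
          exact_mod_cast le_trans (Finset.le_sup z.2) (le_add_right le_rfl)
  · have hCd : dist (f x) (f y) ≤ C := hC (mem_image_of_mem f hx) (mem_image_of_mem f hy)
    have hQ' : (Q : ℝ) = max C 0 / δ := by
      rw [hQ, NNReal.coe_div, Real.coe_toNNReal', Real.coe_toNNReal' δ, max_eq_left hδ.le]
    have h1 : C ≤ (Q : ℝ) * dist x y := by
      rw [hQ']
      have h2 : max C 0 / δ * δ ≤ max C 0 / δ * dist x y := by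
        apply mul_le_mul_of_nonneg_left hxy (by positivity)
      calc C ≤ max C 0 := le_max_left _ _
        _ = max C 0 / δ * δ := by field_simp
        _ ≤ _ := h2
    calc dist (f x) (f y) ≤ C := hCd
      _ ≤ (Q : ℝ) * dist x y := h1
      _ ≤ ((K0 + Q : NNReal) : ℝ) * dist x y := by
          apply mul_le_mul_of_nonneg_right _ dist_nonneg
          exact_mod_cast le_add_left le_rfl

noncomputable section

variable {N : ℕ}

/-- Coordinatewise clamp to `[-B, B]`. -/
def hjClamp (B : ℝ) (v : Fin N → ℝ) : Fin N → ℝ := fun i => max (-B) (min B (v i))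

lemma hjClamp_lipschitz (B : ℝ) : LipschitzWith 1 (hjClamp (N := N) B) := by
  refine LipschitzWith.of_dist_le_mul fun v w => ?_
  rw [NNReal.coe_one, one_mul]
  refine (dist_pi_le_iff dist_nonneg).mpr fun i => ?_
  have h1 : dist (min B (v i)) (min B (w i)) ≤ dist (v i) (w i) := by
    rw [Real.dist_eq, Real.dist_eq]
    exact (abs_min_sub_min_le_max B (v i) B (w i)).trans (by simp)
  calc dist (hjClamp B v i) (hjClamp B w i)
      ≤ dist (min B (v i)) (min B (w i)) := by
        rw [Real.dist_eq, Real.dist_eq, hjClamp, hjClamp, max_comm (-B) _, max_comm (-B) _]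
        exact abs_max_sub_max_le_abs _ _ _
    _ ≤ dist (v i) (w i) := h1
    _ ≤ dist v w := dist_le_pi_dist v w i

lemma hjClamp_abs_le {B : ℝ} (hB : 0 ≤ B) (v : Fin N → ℝ) (i : Fin N) : |hjClamp B v i| ≤ B := by
  rw [abs_le]
  constructor
  · exact le_max_left _ _
  · exact max_le (by linarith) (min_le_left _ _)

lemma hjClamp_eq_self {B : ℝ} {v : Fin N → ℝ} (h : ∀ i, |v i| ≤ B) : hjClamp B v = v := by
  funext i
  rcases abs_le.mp (h i) with ⟨h1, h2⟩
  simp [hjClamp, min_eq_right h2, max_eq_right h1]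

lemma hjClamp_mono {B : ℝ} {v : Fin N → ℝ} {i j : Fin N} (h : v j ≤ v i) :
    hjClamp B v j ≤ hjClamp B v i :=
  max_le_max le_rfl (min_le_min le_rfl h)

lemma hjClamp_nonneg {B : ℝ} (hB : 0 ≤ B) {v : Fin N → ℝ} {i : Fin N} (h : 0 ≤ v i) :
    0 ≤ hjClamp B v i :=
  le_trans (le_min hB h) (le_max_right _ _)

lemma hjClamp_neg {B : ℝ} (hB : 0 ≤ B) (v : Fin N → ℝ) :
    hjClamp B (-v) = -hjClamp B v := by
  funext i
  simp only [hjClamp, Pi.neg_apply, min_def, max_def]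
  split_ifs <;> linarith




variable {N : ℕ}

lemma locallyLipschitz_sub {E : Type*} [MetricSpace E] {f g : E → ℝ}
    (hf : LocallyLipschitz f) (hg : LocallyLipschitz g) : LocallyLipschitz (fun x => f x - g x) := by
  intro x
  obtain ⟨Kf, tf, htf, hKf⟩ := hf x
  obtain ⟨Kg, tg, htg, hKg⟩ := hg x
  refine ⟨Kf + Kg, tf ∩ tg, inter_mem htf htg, lipschitzOnWith_iff_dist_le_mul.mpr
    fun y hy z hz => ?_⟩
  have h1 := (lipschitzOnWith_iff_dist_le_mul.mp hKf) y hy.1 z hz.1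
  have h2 := (lipschitzOnWith_iff_dist_le_mul.mp hKg) y hy.2 z hz.2
  simp only [Real.dist_eq] at *
  push_cast
  calc |f y - g y - (f z - g z)| = |(f y - f z) - (g y - g z)| := by ring_nf
    _ ≤ |f y - f z| + |g y - g z| := abs_sub _ _
    _ ≤ (Kf : ℝ) * dist y z + (Kg : ℝ) * dist y z := add_le_add h1 h2
    _ = ((Kf : ℝ) + Kg) * dist y z := by ring

lemma locallyLipschitz_pi' {E : Type*} [MetricSpace E] {f : E → Fin N → ℝ}
    (h : ∀ i, LocallyLipschitz fun v => f v i) : LocallyLipschitz f := by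
  intro x
  choose K t ht hK using fun i => h i x
  refine ⟨Finset.univ.sup K, ⋂ i, t i, (Filter.iInter_mem).mpr ht,
    lipschitzOnWith_iff_dist_le_mul.mpr fun y hy z hz => ?_⟩
  refine (dist_pi_le_iff (by positivity)).mpr fun i => ?_
  calc dist (f y i) (f z i) ≤ (K i : ℝ) * dist y z :=
        (lipschitzOnWith_iff_dist_le_mul.mp (hK i)) y (mem_iInter.mp hy i) z (mem_iInter.mp hz i)
    _ ≤ _ := by
        apply mul_le_mul_of_nonneg_right _ dist_nonneg
        exact_mod_cast Finset.le_sup (Finset.mem_univ i)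

variable {V : Fin N → Finset (Fin N)} (H : (i : Fin N) → (↥(V i) → ℝ) → ℝ) (r : ℝ)

/-- The vector field of the HJ ODE system. -/
def hjF (v : Fin N → ℝ) : Fin N → ℝ :=
  fun i => r * v i - H i (fun j => v j.1 - v i)

lemma hjF_locallyLipschitz (hlip : ∀ i, LocallyLipschitz (H i)) :
    LocallyLipschitz (hjF H r) := by
  apply locallyLipschitz_pi'
  intro i
  apply locallyLipschitz_sub
  · exact ((r • ContinuousLinearMap.proj (R := ℝ) (φ := fun _ : Fin N => ℝ) i).lipschitz).locallyLipschitz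
  · have hc : LocallyLipschitz fun v : Fin N → ℝ => (fun j : ↥(V i) => v j.1 - v i) := by
      exact (ContinuousLinearMap.pi (fun j : ↥(V i) =>
        ContinuousLinearMap.proj (R := ℝ) (φ := fun _ : Fin N => ℝ) j.1 -
        ContinuousLinearMap.proj i)).lipschitz.locallyLipschitz
    exact (hlip i).comp hc



variable {N : ℕ} {V : Fin N → Finset (Fin N)} {H : (i : Fin N) → (↥(V i) → ℝ) → ℝ}

lemma hj_upper_bound
    (hmono : ∀ (i : Fin N) (p p' : ↥(V i) → ℝ), (∀ j, p' j ≤ p j) → H i p' ≤ H i p)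
    {r : ℝ} (hr : 0 ≤ r) {c B A0 a T : ℝ}
    (hc : ∀ i, H i 0 ≤ c) (hc0 : 0 ≤ c) (hB : 0 ≤ B) (hA0 : 1 ≤ A0)
    {f : ℝ → Fin N → ℝ}
    (hf : ∀ t ∈ Icc a T, HasDerivWithinAt f (hjF H r (hjClamp B (f t))) (Icc a T) t)
    (hfT : ∀ i, f T i < A0) :
    ∀ t ∈ Icc a T, ∀ i, f t i < A0 + (c + 1) * (T - t) := by
  have hcont : ContinuousOn f (Icc a T) := fun s hs => (hf s hs).continuousWithinAt
  by_contra hbad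
  push_neg at hbad
  obtain ⟨t0, ht0, i0, hi0⟩ := hbad
  set ψ : ℝ → ℝ := fun s => A0 + (c + 1) * (T - s) with hψdef
  have hcont' : ∀ i : Fin N, ContinuousOn (fun s => f s i - ψ s) (Icc a T) := fun i =>
    ((continuous_apply i).comp_continuousOn hcont).sub (by fun_prop)
  set S : Set ℝ := ⋃ i : Fin N, (Icc a T ∩ (fun s => f s i - ψ s) ⁻¹' (Ici 0)) with hSdef
  have hSne : S.Nonempty := ⟨t0, mem_iUnion.mpr ⟨i0, ⟨ht0, by simp [ψ]; linarith⟩⟩⟩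
  have hSclosed : IsClosed S := isClosed_iUnion_of_finite fun i =>
    (hcont' i).preimage_isClosed_of_isClosed isClosed_Icc isClosed_Ici
  have hSsub : S ⊆ Icc a T := iUnion_subset fun i => inter_subset_left
  have hScomp : IsCompact S := isCompact_Icc.of_isClosed_subset hSclosed hSsub
  obtain ⟨w, hwS, hwmax⟩ := hScomp.exists_isGreatest hSne
  obtain ⟨i, hwIcc, hwge⟩ : ∃ i : Fin N, w ∈ Icc a T ∧ 0 ≤ f w i - ψ w := by
    obtain ⟨i, hi⟩ := mem_iUnion.mp hwS; exact ⟨i, hi.1, hi.2⟩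
  have hwT : w < T := by
    rcases eq_or_lt_of_le hwIcc.2 with h | h
    · exfalso; have h2 := hfT i; rw [h] at hwge; simp [ψ] at hwge; linarith
    · exact h
  have hafter : ∀ s ∈ Ioc w T, ∀ j : Fin N, f s j - ψ s < 0 := by
    intro s hs j
    by_contra hcon
    push_neg at hcon
    have hsS : s ∈ S := mem_iUnion.mpr ⟨j, ⟨⟨hwIcc.1.trans hs.1.le, hs.2⟩, hcon⟩⟩
    exact absurd (hwmax hsS) (not_le.mpr hs.1)
  haveI hNB : (𝓝[Ioc w T] w).NeBot := by
    apply mem_closure_iff_nhdsWithin_neBot.mp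
    rw [closure_Ioc hwT.ne]
    exact left_mem_Icc.mpr hwT.le
  have hIocsub : Ioc w T ⊆ Icc a T := fun s hs => ⟨hwIcc.1.trans hs.1.le, hs.2⟩
  have hle : ∀ j : Fin N, f w j ≤ ψ w := by
    intro j
    have hcw : ContinuousWithinAt (fun s => f s j - ψ s) (Ioc w T) w :=
      ((hcont' j) w hwIcc).mono hIocsub
    have h2 := le_of_tendsto hcw.tendsto
      ((eventually_mem_nhdsWithin).mono fun s hs => (hafter s hs j).le)
    linarith
  have heq : f w i = ψ w := le_antisymm (hle i) (by linarith)
  have hd := (hasDerivWithinAt_pi.mp (hf w hwIcc)) i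
  set d : ℝ := hjF H r (hjClamp B (f w)) i with hdd
  have hψ' : HasDerivAt ψ (-(c + 1)) w := by
    have h1 : HasDerivAt (fun s : ℝ => A0 + (c + 1) * (T - s)) (0 + (c + 1) * (0 - 1)) w := by
      exact (hasDerivAt_const w A0).add
        (((hasDerivAt_const w T).sub (hasDerivAt_id w)).const_mul (c + 1))
    exact h1.congr_deriv (by ring)
  have hh : HasDerivWithinAt (fun s => f s i - ψ s) (d + (c + 1)) (Icc w T) w := by
    have h2 := hd.sub hψ'.hasDerivWithinAt
    have h3 : d - -(c + 1) = d + (c + 1) := by ring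
    rw [h3] at h2
    exact h2.mono (Icc_subset_Icc hwIcc.1 le_rfl)
  have hmax : IsLocalMaxOn (fun s => f s i - ψ s) (Icc w T) w := by
    refine (eventually_mem_nhdsWithin).mono fun s hs => ?_
    rcases eq_or_lt_of_le hs.1 with h | h
    · rw [← h]
    · have := hafter s ⟨h, hs.2⟩ i
      have hw0 : f w i - ψ w = 0 := by rw [heq]; ring
      simp only [hw0]; linarith
  have hcone : T - w ∈ posTangentConeAt (Icc w T) w :=
    sub_mem_posTangentConeAt_of_segment_subset (by rw [segment_eq_Icc hwT.le])
  have hnp := hmax.hasFDerivWithinAt_nonpos hh.hasFDerivWithinAt hcone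
  simp only [ContinuousLinearMap.smulRight_apply, ContinuousLinearMap.one_apply,
    ContinuousLinearMap.toSpanSingleton_apply, smul_eq_mul] at hnp
  have hdle : d ≤ -(c + 1) := by nlinarith [sub_pos.mpr hwT]
  have hclamp_le : ∀ j : ↥(V i), hjClamp B (f w) j.1 - hjClamp B (f w) i ≤ (0 : ℝ) := by
    intro j
    have h1 : f w j.1 ≤ f w i := (hle j.1).trans_eq heq.symm
    linarith [hjClamp_mono (B := B) h1]
  have hH : H i (fun j => hjClamp B (f w) j.1 - hjClamp B (f w) i) ≤ c :=
    le_trans (hmono i 0 _ (fun j => by simpa using hclamp_le j)) (hc i)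
  have hfw_pos : 0 ≤ f w i := by
    rw [heq]; simp only [ψ]; nlinarith [sub_pos.mpr hwT]
  have hd_ge : -c ≤ d := by
    rw [hdd, hjF]
    have h1 : 0 ≤ r * hjClamp B (f w) i := mul_nonneg hr (hjClamp_nonneg hB hfw_pos)
    linarith
  linarith

lemma hj_bound
    (hmono : ∀ (i : Fin N) (p p' : ↥(V i) → ℝ), (∀ j, p' j ≤ p j) → H i p' ≤ H i p)
    {r : ℝ} (hr : 0 ≤ r) {c B A0 a T : ℝ}
    (hc : ∀ i, |H i 0| ≤ c) (hc0 : 0 ≤ c) (hB : 0 ≤ B) (hA0 : 1 ≤ A0)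
    {f : ℝ → Fin N → ℝ}
    (hf : ∀ t ∈ Icc a T, HasDerivWithinAt f (hjF H r (hjClamp B (f t))) (Icc a T) t)
    (hfT : ∀ i, |f T i| < A0) :
    ∀ t ∈ Icc a T, ∀ i, |f t i| < A0 + (c + 1) * (T - t) := by
  have hup := hj_upper_bound hmono hr (fun i => (le_abs_self _).trans (hc i)) hc0 hB hA0 hf
    (fun i => (le_abs_self _).trans_lt (hfT i))
  set H' : (i : Fin N) → (↥(V i) → ℝ) → ℝ := fun i q => -H i (-q) with hH'
  have hmono' : ∀ (i : Fin N) (p p' : ↥(V i) → ℝ), (∀ j, p' j ≤ p j) → H' i p' ≤ H' i p := by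
    intro i p p' hpp
    simp only [hH', neg_le_neg_iff]
    exact hmono i (-p') (-p) fun j => by simpa using hpp j
  have hfieldeq : ∀ v : Fin N → ℝ, hjF H' r (hjClamp B (-v)) = -(hjF H r (hjClamp B v)) := by
    intro v
    funext i
    rw [hjClamp_neg hB]
    simp only [hjF, hH', Pi.neg_apply]
    have heq2 : (-fun j : ↥(V i) => -hjClamp B v j.1 - -hjClamp B v i) =
        fun j : ↥(V i) => hjClamp B v j.1 - hjClamp B v i := by
      funext j; simp only [Pi.neg_apply]; ring
    rw [heq2]
    ring
  have hf' : ∀ t ∈ Icc a T,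
      HasDerivWithinAt (fun s => -(f s)) (hjF H' r (hjClamp B ((fun s => -(f s)) t)))
        (Icc a T) t := by
    intro t ht
    have := (hf t ht).neg
    rwa [← hfieldeq (f t)] at this
  have hdn := hj_upper_bound (H := H') hmono' hr
    (fun i => by simpa [hH'] using (neg_le_abs _).trans (hc i)) hc0 hB hA0 hf'
    (fun i => by simpa using (neg_le_abs _).trans_lt (hfT i))
  intro t ht i
  rw [abs_lt]
  constructor
  · have := hdn t ht i
    simp only [Pi.neg_apply] at this
    linarith
  · exact hup t ht i

lemma hj_exists_Icc
    (hlip : ∀ i, LocallyLipschitz (H i))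
    (hmono : ∀ (i : Fin N) (p p' : ↥(V i) → ℝ), (∀ j, p' j ≤ p j) → H i p' ≤ H i p)
    {r : ℝ} (hr : 0 ≤ r) {a T : ℝ} (haT : a ≤ T) (g : Fin N → ℝ) :
    ∃ f : ℝ → Fin N → ℝ, f T = g ∧
      ∀ t ∈ Icc a T, HasDerivWithinAt f (hjF H r (f t)) (Icc a T) t := by
  set c : ℝ := ‖(fun i : Fin N => H i 0 : Fin N → ℝ)‖ with hcdef
  have hc0 : 0 ≤ c := norm_nonneg _
  have hc : ∀ i, |H i 0| ≤ c := fun i => by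
    simpa [Real.norm_eq_abs] using norm_le_pi_norm (fun i : Fin N => H i 0) i
  set A0 : ℝ := ‖g‖ + 1 with hA0def
  have hA0 : 1 ≤ A0 := by have := norm_nonneg g; linarith
  set B : ℝ := A0 + (c + 1) * (T - a) with hBdef
  have hB : 0 ≤ B := by nlinarith
  obtain ⟨K, hK⟩ := exists_lipschitzOnWith_of_isCompact (hjF_locallyLipschitz H r hlip)
    (isCompact_closedBall (0 : Fin N → ℝ) B)
  have hmaps : MapsTo (hjClamp B) univ (Metric.closedBall (0 : Fin N → ℝ) B) := by
    intro x _
    rw [Metric.mem_closedBall, dist_zero_right]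
    exact (pi_norm_le_iff_of_nonneg hB).mpr fun i => by
      simpa [Real.norm_eq_abs] using hjClamp_abs_le hB x i
  have hFlip : LipschitzWith (K * 1) (hjF H r ∘ hjClamp B) := by
    rw [← lipschitzOnWith_univ]
    exact hK.comp ((hjClamp_lipschitz B).lipschitzOnWith) hmaps
  obtain ⟨C, hC⟩ := (isCompact_closedBall (0 : Fin N → ℝ) B).exists_bound_of_continuousOn
    ((hjF_locallyLipschitz H r hlip).continuous.continuousOn)
  have hC0 : 0 ≤ C := le_trans (norm_nonneg _) (hC 0 (Metric.mem_closedBall_self hB))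
  have hCT : 0 ≤ C * (T - a) := mul_nonneg hC0 (by linarith)
  have hPL : IsPicardLindelof (fun _ x => (hjF H r ∘ hjClamp B) x) (tmin := a) (tmax := T)
      ⟨T, ⟨haT, le_rfl⟩⟩ g (Real.toNNReal (C * (T - a))) 0 (Real.toNNReal C) (K * 1) := by
    refine ⟨fun t _ => hFlip.lipschitzOnWith,
      fun x _ => continuousOn_const, fun t _ x _ => ?_, ?_⟩
    · rw [Real.coe_toNNReal _ hC0]; exact hC _ (hmaps (mem_univ x))
    simp only [NNReal.coe_zero, sub_zero, tsub_zero, Real.coe_toNNReal _ hC0,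
      Real.coe_toNNReal _ hCT]
    show C * max (T - T) (T - a) ≤ C * (T - a)
    rw [sub_self, max_eq_right (by linarith)]
  obtain ⟨f, hfT, hf⟩ := hPL.exists_eq_forall_mem_Icc_hasDerivWithinAt₀
  replace hfT : f T = g := hfT
  have hgi : ∀ i, |g i| < A0 := by
    intro i
    have h3 := norm_le_pi_norm g i
    simp only [Real.norm_eq_abs] at h3
    rw [hA0def]; linarith
  have hbd := hj_bound hmono hr hc hc0 hB hA0 (f := f) hf
    (fun i => by rw [hfT]; exact hgi i)
  refine ⟨f, hfT, fun t ht => ?_⟩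
  have hcl : hjClamp B (f t) = f t := by
    apply hjClamp_eq_self
    intro i
    refine le_trans (hbd t ht i).le ?_
    rw [hBdef]
    have h1 : T - t ≤ T - a := by linarith [ht.1]
    nlinarith
  have h2 := hf t ht
  simp only [Function.comp] at h2 ⊢
  rwa [hcl] at h2

lemma hj_uniq
    (hlip : ∀ i, LocallyLipschitz (H i)) {r a T : ℝ}
    (f1 f2 : ℝ → Fin N → ℝ)
    (hc1 : ContinuousOn f1 (Icc a T)) (hc2 : ContinuousOn f2 (Icc a T))
    (h1 : ∀ t ∈ Ioc a T, HasDerivWithinAt f1 (hjF H r (f1 t)) (Iic t) t)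
    (h2 : ∀ t ∈ Ioc a T, HasDerivWithinAt f2 (hjF H r (f2 t)) (Iic t) t)
    (hT : f1 T = f2 T) : EqOn f1 f2 (Icc a T) := by
  obtain ⟨C1, hC1⟩ := isCompact_Icc.exists_bound_of_continuousOn hc1
  obtain ⟨C2, hC2⟩ := isCompact_Icc.exists_bound_of_continuousOn hc2
  set M : ℝ := max C1 C2 with hM
  obtain ⟨K, hK⟩ := exists_lipschitzOnWith_of_isCompact (hjF_locallyLipschitz H r hlip)
    (isCompact_closedBall (0 : Fin N → ℝ) M)
  apply ODE_solution_unique_of_mem_Icc_left (v := fun _ x => hjF H r x)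
    (s := fun _ => Metric.closedBall (0 : Fin N → ℝ) M) (fun _ _ => hK) hc1 h1 ?_ hc2 h2 ?_ hT
  · intro t ht
    rw [Metric.mem_closedBall, dist_zero_right]
    exact (hC1 t (Ioc_subset_Icc_self ht)).trans (le_max_left _ _)
  · intro t ht
    rw [Metric.mem_closedBall, dist_zero_right]
    exact (hC2 t (Ioc_subset_Icc_self ht)).trans (le_max_right _ _)

/-- Global existence and uniqueness for the Hamilton–Jacobi equation on a graph:
there is a unique (continuously differentiable) solution `V` on `(−∞, T]` of
`(d/dt)V_i(t) − r V_i(t) + H(i, (V_j(t) − V_i(t))_{j∈V(i)}) = 0` with `V_i(T) = g(i)`. -/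
theorem global_existence_uniqueness
    (N : ℕ) (V : Fin N → Finset (Fin N)) (hV : ∀ i, i ∉ V i)
    (H : (i : Fin N) → (↥(V i) → ℝ) → ℝ)
    (hlip : ∀ i, LocallyLipschitz (H i))
    (hmono : ∀ (i : Fin N) (p p' : ↥(V i) → ℝ), (∀ j, p' j ≤ p j) → H i p' ≤ H i p)
    (r : ℝ) (hr : 0 ≤ r) (T : ℝ) (g : Fin N → ℝ) :
    (∃ W : Fin N → ℝ → ℝ,
      (∀ i, ∀ t ∈ Iic T,
        HasDerivWithinAt (W i)
          (r * W i t - H i (fun j => W j.1 t - W i t)) (Iic T) t) ∧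
      (∀ i, W i T = g i)) ∧
    (∀ W W' : Fin N → ℝ → ℝ,
      ((∀ i, ∀ t ∈ Iic T,
        HasDerivWithinAt (W i)
          (r * W i t - H i (fun j => W j.1 t - W i t)) (Iic T) t) ∧
        (∀ i, W i T = g i)) →
      ((∀ i, ∀ t ∈ Iic T,
        HasDerivWithinAt (W' i)
          (r * W' i t - H i (fun j => W' j.1 t - W' i t)) (Iic T) t) ∧
        (∀ i, W' i T = g i)) →
      ∀ i, ∀ t ∈ Iic T, W i t = W' i t) := by
  constructor
  · -- existence
    have hex : ∀ n : ℕ, ∃ f : ℝ → Fin N → ℝ, f T = g ∧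
        ∀ t ∈ Icc (T - (n + 1)) T, HasDerivWithinAt f (hjF H r (f t))
          (Icc (T - (n + 1)) T) t := by
      intro n
      refine hj_exists_Icc hlip hmono hr ?_ g
      have h0 : (0 : ℝ) ≤ (n : ℝ) + 1 := by positivity
      linarith
    choose f hfT hf using hex
    have hcont : ∀ n : ℕ, ContinuousOn (f n) (Icc (T - (n + 1)) T) :=
      fun n t ht => (hf n t ht).continuousWithinAt
    have hIic : ∀ n : ℕ, ∀ t ∈ Ioc (T - (n + 1)) T,
        HasDerivWithinAt (f n) (hjF H r (f n t)) (Iic t) t := by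
      intro n t ht
      refine (hf n t (Ioc_subset_Icc_self ht)).mono_of_mem_nhdsWithin ?_
      refine mem_nhdsWithin.mpr ⟨Ioi (T - (n + 1)), isOpen_Ioi, ht.1, fun s hs => ?_⟩
      exact ⟨hs.1.le, hs.2.trans ht.2⟩
    have hagree : ∀ m n : ℕ, m ≤ n → EqOn (f m) (f n) (Icc (T - (m + 1)) T) := by
      intro m n hmn
      have hmn' : (T - (n + 1) : ℝ) ≤ T - (m + 1) := by
        have : (m : ℝ) ≤ n := Nat.cast_le.mpr hmn
        linarith
      have hsub : Icc (T - (m + 1)) T ⊆ Icc (T - (n + 1)) T := Icc_subset_Icc hmn' le_rfl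
      refine hj_uniq hlip (f m) (f n) (hcont m) ((hcont n).mono hsub) (hIic m)
        (fun t ht => hIic n t ⟨hmn'.trans_lt ht.1, ht.2⟩) (by rw [hfT m, hfT n])
    have hag : ∀ m n : ℕ, ∀ t, t ∈ Icc (T - (m + 1)) T → t ∈ Icc (T - (n + 1)) T →
        f m t = f n t := by
      intro m n t h1 h2
      rcases le_total m n with h | h
      · exact hagree m n h h1
      · exact (hagree n m h h2).symm
    have hmem : ∀ t ≤ T, t ∈ Icc (T - ((⌈T - t⌉₊ : ℝ) + 1)) T := by
      intro t ht
      have := Nat.le_ceil (T - t)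
      exact ⟨by linarith, ht⟩
    refine ⟨fun i t => f ⌈T - t⌉₊ t i, fun i t ht => ?_, fun i => by
      show f ⌈T - T⌉₊ T i = g i
      exact congrFun (hfT _) i⟩
    set n : ℕ := ⌈T - t⌉₊ + 1 with hn
    have hnlt : T - ((n : ℝ) + 1) < t := by
      have := Nat.le_ceil (T - t)
      rw [hn]; push_cast; linarith
    have htn : t ∈ Icc (T - ((n : ℝ) + 1)) T := ⟨hnlt.le, ht⟩
    have hWt : f ⌈T - t⌉₊ t = f n t := hag _ n t (hmem t ht) htn
    have hIccmem : Icc (T - ((n : ℝ) + 1)) T ∈ 𝓝[Iic T] t :=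
      mem_nhdsWithin.mpr ⟨Ioi (T - ((n : ℝ) + 1)), isOpen_Ioi, hnlt,
        fun s hs => ⟨hs.1.le, hs.2⟩⟩
    have hd := ((hasDerivWithinAt_pi.mp (hf n t htn)) i).mono_of_mem_nhdsWithin hIccmem
    have hEv : (fun s => f ⌈T - s⌉₊ s i) =ᶠ[𝓝[Iic T] t] fun s => f n s i := by
      filter_upwards [self_mem_nhdsWithin,
        mem_nhdsWithin_of_mem_nhds (Ioi_mem_nhds hnlt)] with s hs1 hs2
      exact congrFun (hag _ n s (hmem s hs1) ⟨hs2.le, hs1⟩) i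
    have hval : r * f ⌈T - t⌉₊ t i - H i (fun j => f ⌈T - t⌉₊ t j.1 - f ⌈T - t⌉₊ t i) =
        hjF H r (f n t) i := by
      simp only [hjF, hWt]
    rw [hval]
    exact hd.congr_of_eventuallyEq hEv (congrFun hWt i)
  · -- uniqueness
    rintro W W' ⟨hW, hWT⟩ ⟨hW', hW'T⟩ i t ht
    set F1 : ℝ → Fin N → ℝ := fun s j => W j s with hF1
    set F2 : ℝ → Fin N → ℝ := fun s j => W' j s with hF2
    have hc1 : ContinuousOn F1 (Icc t T) := by
      refine continuousOn_pi.mpr fun j => ?_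
      have hcW : ContinuousOn (W j) (Iic T) := fun s hs => (hW j s hs).continuousWithinAt
      exact hcW.mono Icc_subset_Iic_self
    have hc2 : ContinuousOn F2 (Icc t T) := by
      refine continuousOn_pi.mpr fun j => ?_
      have hcW : ContinuousOn (W' j) (Iic T) := fun s hs => (hW' j s hs).continuousWithinAt
      exact hcW.mono Icc_subset_Iic_self
    have h1 : ∀ s ∈ Ioc t T, HasDerivWithinAt F1 (hjF H r (F1 s)) (Iic s) s := by
      intro s hs
      refine hasDerivWithinAt_pi.mpr fun j => ?_
      exact (hW j s hs.2).mono (Iic_subset_Iic.mpr hs.2)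
    have h2 : ∀ s ∈ Ioc t T, HasDerivWithinAt F2 (hjF H r (F2 s)) (Iic s) s := by
      intro s hs
      refine hasDerivWithinAt_pi.mpr fun j => ?_
      exact (hW' j s hs.2).mono (Iic_subset_Iic.mpr hs.2)
    have hTe : F1 T = F2 T := funext fun j => by
      show W j T = W' j T
      rw [hWT j, hW'T j]
    have := hj_uniq hlip F1 F2 hc1 hc2 h1 h2 hTe ⟨le_rfl, ht⟩
    exact congrFun this i
end
end

section
/- A priori bounds for the Hamilton–Jacobi equation: let r ≥ 0, t′ < T, g : I → ℝ, and let V = (V_i)_{i∈I} be a continuously differentiable solution on [t′,T] of (d/dt)V_i(t) − r V_i(t) + H(i, (V_j(t) − V_i(t))_{j∈V(i)}) = 0 with V_i(T) = g(i). Let C₁, C₂ ∈ ℝ be constants such that for all (i,t) ∈ I × [t′,T]: −C₁ e^{−r(T−t)} + H(i, (e^{−r(T−t)}(g(j)−g(i)))_{j∈V(i)}) ≥ 0 and −C₂ e^{−r(T−t)} + H(i, (e^{−r(T−t)}(g(j)−g(i)))_{j∈V(i)}) ≤ 0. Then for all (i,t) ∈ I × [t′,T]: e^{−r(T−t)}(g(i)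 + C₁(T−t)) ≤ V_i(t) ≤ e^{−r(T−t)}(g(i) + C₂(T−t)). -/
open Set Filter Topology

private lemma upper_aux {N : ℕ} {Vn : Fin N → Finset (Fin N)}
    (H : (i : Fin N) → (↥(Vn i) → ℝ) → ℝ)
    (hmono : ∀ (i : Fin N) (p p' : ↥(Vn i) → ℝ), (∀ j, p' j ≤ p j) → H i p' ≤ H i p)
    (r T t' : ℝ) (ht' : t' < T) (g : Fin N → ℝ) (W : Fin N → ℝ → ℝ)
    (hW : ∀ i, ∀ t ∈ Icc t' T,
      HasDerivWithinAt (W i) (r * W i t - H i (fun j => W j.1 t - W i t)) (Icc t' T) t)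
    (hWT : ∀ i, W i T = g i) (C₂ : ℝ)
    (hC₂ : ∀ i, ∀ t ∈ Icc t' T,
      -C₂ * Real.exp (-(r * (T - t)))
        + H i (fun j => Real.exp (-(r * (T - t))) * (g j.1 - g i)) ≤ 0) :
    ∀ i, ∀ t ∈ Icc t' T, W i t ≤ Real.exp (-(r * (T - t))) * (g i + C₂ * (T - t)) := by
  set ψ : Fin N → ℝ → ℝ :=
    fun i t => Real.exp (r * (T - t)) * W i t - g i - C₂ * (T - t) with hψdef
  have hexp1 : ∀ t : ℝ, Real.exp (-(r * (T - t))) * Real.exp (r * (T - t)) = 1 := fun t => by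
    rw [← Real.exp_add, neg_add_cancel, Real.exp_zero]
  -- derivative of ψ i
  have hD : ∀ i, ∀ t ∈ Icc t' T, HasDerivWithinAt (ψ i)
      (C₂ - Real.exp (r * (T - t)) * H i (fun j => W j.1 t - W i t)) (Icc t' T) t := by
    intro i t ht
    have h0 : HasDerivAt (fun s : ℝ => r * (T - s)) (r * (-1)) t :=
      ((hasDerivAt_id t).const_sub T).const_mul r
    have h1 : HasDerivAt (fun s : ℝ => Real.exp (r * (T - s)))
        (Real.exp (r * (T - t)) * (r * (-1))) t := h0.exp
    have h2 := h1.hasDerivWithinAt.mul (hW i t ht)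
    have h3 : HasDerivWithinAt (fun s : ℝ => g i + C₂ * (T - s)) (C₂ * (-1)) (Icc t' T) t :=
      ((((hasDerivAt_id t).const_sub T).const_mul C₂).const_add (g i)).hasDerivWithinAt
    have h4 := h2.sub h3
    have heq : ψ i = fun s => Real.exp (r * (T - s)) * W i s - (g i + C₂ * (T - s)) := by
      funext s; simp only [hψdef]; ring
    rw [heq]
    refine h4.congr_deriv ?_
    ring
  have hψc : ∀ i, ContinuousOn (ψ i) (Icc t' T) :=
    fun i t ht => (hD i t ht).continuousWithinAt
  have hψT : ∀ i, ψ i T = 0 := by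
    intro i
    simp only [hψdef, sub_self, mul_zero, Real.exp_zero, one_mul, hWT]
  have hrel : ∀ (i j : Fin N) (t : ℝ), W j t - W i t
      = Real.exp (-(r * (T - t))) * (g j - g i + (ψ j t - ψ i t)) := by
    intro i j t
    have h := hexp1 t
    simp only [hψdef]
    linear_combination (W i t - W j t) * h
  -- main epsilon claim
  have key : ∀ ε : ℝ, 0 < ε → ∀ i, ∀ t ∈ Icc t' T, ψ i t ≤ ε * (T - t) := by
    intro ε hε
    by_contra hcon
    push_neg at hcon
    obtain ⟨i₀, t₀', ht₀', hlt⟩ := hcon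
    set A : Set ℝ := {t | t ∈ Icc t' T ∧ ∃ i, ε * (T - t) < ψ i t} with hA
    have hAne : A.Nonempty := ⟨t₀', ht₀', i₀, hlt⟩
    have hAbdd : BddAbove A := ⟨T, fun a ha => ha.1.2⟩
    set t₀ := sSup A with ht₀def
    have ht₀t' : t' ≤ t₀ := le_trans ht₀'.1 (le_csSup hAbdd ⟨ht₀', i₀, hlt⟩)
    have hTA : T ∉ A := by
      rintro ⟨-, i, hi⟩
      rw [hψT i] at hi
      nlinarith
    -- near T all ψ i t < ε(T - t)
    have hnear : ∀ᶠ t in 𝓝[Icc t' T \ {T}] T, ∀ i, ψ i t < ε * (T - t) := by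
      rw [eventually_all]
      intro i
      have hTmem : T ∈ Icc t' T := right_mem_Icc.2 ht'.le
      have hd := hD i T hTmem
      have hfun : (fun j : ↥(Vn i) => W j.1 T - W i T)
          = fun j => Real.exp (-(r * (T - T))) * (g j.1 - g i) := by
        funext j; rw [hWT, hWT]; simp
      have hge : 0 ≤ C₂ - Real.exp (r * (T - T)) * H i (fun j => W j.1 T - W i T) := by
        have h2 := hC₂ i T hTmem
        rw [hfun]
        simp only [sub_self, mul_zero, neg_zero, Real.exp_zero, one_mul] at h2 ⊢
        linarith
      rw [hasDerivWithinAt_iff_tendsto_slope] at hd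
      have hev : ∀ᶠ t in 𝓝[Icc t' T \ {T}] T, -ε < slope (ψ i) T t :=
        hd.eventually (eventually_gt_nhds (by linarith))
      filter_upwards [hev, self_mem_nhdsWithin] with t hslope htmem
      have htT : t < T := lt_of_le_of_ne htmem.1.2 (by simpa using htmem.2)
      rw [slope_def_field, hψT i, sub_zero] at hslope
      have h6 : t - T < 0 := by linarith
      have h7 := (lt_div_iff_of_neg h6).1 hslope
      have h8 : ε * (T - t) = -ε * (t - T) * (-1) * (-1) := by ring
      nlinarith
    rw [eventually_nhdsWithin_iff, Metric.eventually_nhds_iff] at hnear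
    obtain ⟨δ, hδ, hδp⟩ := hnear
    have hAle : ∀ a ∈ A, a ≤ T - δ := by
      intro a ha
      by_contra hgt
      push_neg at hgt
      have haT : a < T := lt_of_le_of_ne ha.1.2 (fun h => hTA (h ▸ ha))
      have hdist : dist a T < δ := by
        rw [Real.dist_eq, abs_of_nonpos (by linarith)]; linarith
      have hall := hδp hdist ⟨ha.1, by simpa using haT.ne⟩
      obtain ⟨-, i, hi⟩ := ha
      exact absurd hi (not_lt.2 (hall i).le)
    have ht₀T : t₀ < T := lt_of_le_of_lt (csSup_le hAne hAle) (by linarith)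
    have ht₀Icc : t₀ ∈ Icc t' T := ⟨ht₀t', ht₀T.le⟩
    have hafter : ∀ t ∈ Ioc t₀ T, ∀ j, ψ j t ≤ ε * (T - t) := by
      intro t ht j
      by_contra hlt2
      push_neg at hlt2
      have htA : t ∈ A := ⟨⟨le_trans ht₀t' ht.1.le, ht.2⟩, j, hlt2⟩
      exact absurd (le_csSup hAbdd htA) (not_le.2 ht.1)
    have hne : (𝓝[Ioc t₀ T] t₀).NeBot := by
      rw [nhdsWithin_Ioc_eq_nhdsGT ht₀T]; infer_instance
    have hle : ∀ j, ψ j t₀ ≤ ε * (T - t₀) := by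
      intro j
      have hc : Tendsto (ψ j) (𝓝[Ioc t₀ T] t₀) (𝓝 (ψ j t₀)) :=
        ((hψc j) t₀ ht₀Icc).mono (fun x hx => ⟨le_trans ht₀t' hx.1.le, hx.2⟩)
      have hc2 : Tendsto (fun t => ε * (T - t)) (𝓝[Ioc t₀ T] t₀) (𝓝 (ε * (T - t₀))) :=
        ((continuous_const.mul (continuous_const.sub continuous_id)).tendsto t₀).mono_left
          nhdsWithin_le_nhds
      exact le_of_tendsto_of_tendsto hc hc2
        (by filter_upwards [self_mem_nhdsWithin] with t ht using hafter t ht j)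
    have hex : ∃ i, ε * (T - t₀) ≤ ψ i t₀ := by
      by_contra hno
      push_neg at hno
      have hev : ∀ᶠ t in 𝓝[Icc t' T] t₀, ∀ i, ψ i t < ε * (T - t) := by
        rw [eventually_all]
        intro i
        have hcont : Tendsto (fun t => ε * (T - t) - ψ i t) (𝓝[Icc t' T] t₀)
            (𝓝 (ε * (T - t₀) - ψ i t₀)) :=
          (((continuous_const.mul (continuous_const.sub continuous_id)).continuousWithinAt).sub
            ((hψc i) t₀ ht₀Icc))
        have hpos : 0 < ε * (T - t₀) - ψ i t₀ := by linarith [hno i]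
        filter_upwards [hcont.eventually (eventually_gt_nhds hpos)] with t htp
        linarith
      rw [eventually_nhdsWithin_iff, Metric.eventually_nhds_iff] at hev
      obtain ⟨δ', hδ', hp⟩ := hev
      obtain ⟨a, haA, hagt⟩ := exists_lt_of_lt_csSup hAne (show t₀ - δ' < t₀ by linarith)
      have haTle : a ≤ t₀ := le_csSup hAbdd haA
      have hdista : dist a t₀ < δ' := by
        rw [Real.dist_eq, abs_of_nonpos (by linarith)]; linarith
      have hall := hp hdista haA.1
      obtain ⟨-, i, hi⟩ := haA
      exact absurd hi (not_lt.2 (hall i).le)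
    obtain ⟨i, hieq'⟩ := hex
    have hieq : ψ i t₀ = ε * (T - t₀) := le_antisymm (hle i) hieq'
    have hEpos := Real.exp_pos (r * (T - t₀))
    have hepos := Real.exp_pos (-(r * (T - t₀)))
    have hHle : H i (fun j => W j.1 t₀ - W i t₀)
        ≤ H i (fun j => Real.exp (-(r * (T - t₀))) * (g j.1 - g i)) := by
      apply hmono
      intro j
      rw [hrel i j.1 t₀]
      have hj : ψ j.1 t₀ - ψ i t₀ ≤ 0 := by linarith [hle j.1, hieq]
      nlinarith
    have hH2 := hC₂ i t₀ ht₀Icc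
    have hdge : 0 ≤ C₂ - Real.exp (r * (T - t₀)) * H i (fun j => W j.1 t₀ - W i t₀) := by
      have h1 := hexp1 t₀
      have hA1 := mul_le_mul_of_nonneg_left hHle hEpos.le
      have hA2 : H i (fun j => Real.exp (-(r * (T - t₀))) * (g j.1 - g i))
          ≤ C₂ * Real.exp (-(r * (T - t₀))) := by linarith
      have hA3 := mul_le_mul_of_nonneg_left hA2 hEpos.le
      have hA4 : Real.exp (r * (T - t₀)) * (C₂ * Real.exp (-(r * (T - t₀)))) = C₂ := by
        linear_combination C₂ * h1
      linarith
    have hd := hD i t₀ ht₀Icc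
    rw [hasDerivWithinAt_iff_tendsto_slope] at hd
    have hmonofil : 𝓝[Ioc t₀ T] t₀ ≤ 𝓝[Icc t' T \ {t₀}] t₀ :=
      nhdsWithin_mono _ (fun x hx => ⟨⟨le_trans ht₀t' hx.1.le, hx.2⟩, by
        simpa using (ne_of_gt hx.1)⟩)
    have hd2 : ∀ᶠ t in 𝓝[Ioc t₀ T] t₀, -ε < slope (ψ i) t₀ t :=
      (hd.mono_left hmonofil).eventually (eventually_gt_nhds (by linarith))
    have hfalse : ∀ᶠ t in 𝓝[Ioc t₀ T] t₀, False := by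
      filter_upwards [hd2, self_mem_nhdsWithin] with t hs htm
      have htgt : t₀ < t := htm.1
      rw [slope_def_field] at hs
      have h7 : 0 < t - t₀ := by linarith
      have h8 := (lt_div_iff₀ h7).1 hs
      have h9 : ε * (T - t) < ψ i t := by nlinarith [hieq]
      have htA : t ∈ A := ⟨⟨le_trans ht₀t' htgt.le, htm.2⟩, i, h9⟩
      exact absurd (le_csSup hAbdd htA) (not_le.2 htgt)
    exact hfalse.exists.elim (fun _ h => h)
  -- conclude
  intro i t ht
  have hψle : ψ i t ≤ 0 := by
    by_contra hpos
    push_neg at hpos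
    have h2 : 0 < T - t' := by linarith
    set q := ψ i t with hq
    have hεpos : 0 < q / (2 * (T - t')) := by positivity
    have hc := key _ hεpos i t ht
    have h1 : T - t ≤ T - t' := by linarith [ht.1]
    have h3 : q / (2 * (T - t')) * (T - t) ≤ q / (2 * (T - t')) * (T - t') :=
      mul_le_mul_of_nonneg_left h1 hεpos.le
    have h4 : q / (2 * (T - t')) * (T - t') = q / 2 := by
      field_simp
    rw [← hq] at hc
    clear_value q
    linarith
  have hE := hexp1 t
  have hepos := Real.exp_pos (-(r * (T - t)))
  have h10 := mul_le_mul_of_nonneg_left hψle hepos.le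
  have h12 : Real.exp (-(r * (T - t))) * (ψ i t)
      = W i t - Real.exp (-(r * (T - t))) * (g i + C₂ * (T - t)) := by
    simp only [hψdef]
    linear_combination (W i t) * hE
  linarith [h12 ▸ h10]

/-- A priori bounds for the Hamilton–Jacobi equation: any solution `V` on
`[t', T]` with terminal value `g` lies between `e^{−r(T−t)}(g(i)+C₁(T−t))` and
`e^{−r(T−t)}(g(i)+C₂(T−t))` whenever `C₁`, `C₂` satisfy the stated sub/supersolution
inequalities. -/
theorem a_priori_bounds
    (N : ℕ) (V : Fin N → Finset (Fin N)) (hV : ∀ i, i ∉ V i)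
    (H : (i : Fin N) → (↥(V i) → ℝ) → ℝ)
    (hmono : ∀ (i : Fin N) (p p' : ↥(V i) → ℝ), (∀ j, p' j ≤ p j) → H i p' ≤ H i p)
    (r : ℝ) (hr : 0 ≤ r) (T t' : ℝ) (ht' : t' < T) (g : Fin N → ℝ)
    (W : Fin N → ℝ → ℝ)
    (hW : ∀ i, ∀ t ∈ Icc t' T,
      HasDerivWithinAt (W i)
        (r * W i t - H i (fun j => W j.1 t - W i t)) (Icc t' T) t)
    (hWT : ∀ i, W i T = g i)
    (C₁ C₂ : ℝ)
    (hC₁ : ∀ i, ∀ t ∈ Icc t' T,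
      0 ≤ -C₁ * Real.exp (-(r * (T - t)))
        + H i (fun j => Real.exp (-(r * (T - t))) * (g j.1 - g i)))
    (hC₂ : ∀ i, ∀ t ∈ Icc t' T,
      -C₂ * Real.exp (-(r * (T - t)))
        + H i (fun j => Real.exp (-(r * (T - t))) * (g j.1 - g i)) ≤ 0) :
    ∀ i, ∀ t ∈ Icc t' T,
      Real.exp (-(r * (T - t))) * (g i + C₁ * (T - t)) ≤ W i t ∧
      W i t ≤ Real.exp (-(r * (T - t))) * (g i + C₂ * (T - t)) := by
  intro i t ht
  constructor
  · -- lower bound via negation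
    set H' : (i : Fin N) → (↥(V i) → ℝ) → ℝ := fun i p => -H i (fun j => -p j) with hH'
    have hmono' : ∀ (i : Fin N) (p p' : ↥(V i) → ℝ), (∀ j, p' j ≤ p j) → H' i p' ≤ H' i p := by
      intro i p p' hpp
      simp only [hH', neg_le_neg_iff]
      exact hmono i _ _ (fun j => neg_le_neg (hpp j))
    have hW' : ∀ i, ∀ t ∈ Icc t' T,
        HasDerivWithinAt (fun s => -W i s)
          (r * (-W i t) - H' i (fun j => -W j.1 t - -W i t)) (Icc t' T) t := by
      intro i t ht
      have h := (hW i t ht).neg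
      refine h.congr_deriv ?_
      simp only [hH']
      have hfe : (fun j : ↥(V i) => -(-W j.1 t - -W i t)) = fun j => W j.1 t - W i t := by
        funext j; ring
      rw [hfe]; ring
    have hWT' : ∀ i, (fun s => -W i s) T = -g i := fun i => by simp [hWT i]
    have hC' : ∀ i, ∀ t ∈ Icc t' T,
        -(-C₁) * Real.exp (-(r * (T - t)))
          + H' i (fun j => Real.exp (-(r * (T - t))) * (-g j.1 - -g i)) ≤ 0 := by
      intro i t ht
      simp only [hH']
      have hfe : (fun j : ↥(V i) => -(Real.exp (-(r * (T - t))) * (-g j.1 - -g i)))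
          = fun j => Real.exp (-(r * (T - t))) * (g j.1 - g i) := by
        funext j; ring
      rw [hfe]
      linarith [hC₁ i t ht]
    have hthis : -W i t ≤ Real.exp (-(r * (T - t))) * (-g i + -C₁ * (T - t)) :=
      upper_aux H' hmono' r T t' ht' (fun i => -g i) (fun i s => -W i s)
        hW' hWT' (-C₁) hC' i t ht
    have heq : Real.exp (-(r * (T - t))) * (-g i + -C₁ * (T - t))
        = -(Real.exp (-(r * (T - t))) * (g i + C₁ * (T - t))) := by ring
    linarith [heq ▸ hthis]
  · exact upper_aux H hmono r T t' ht' g W hW hWT C₂ hC₂ i t ht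
end

section
/- Convergence of the finite-horizon solution to the stationary equation: let r > 0, T ∈ ℝ, and let V = (V_i)_{i∈I} be a continuously differentiable solution on (−∞, T] of (d/dt)V_i(t) − r V_i(t) + H(i, (V_j(t) − V_i(t))_{j∈V(i)}) = 0 for all i ∈ I. Suppose that for each i ∈ I, V_i(t) converges to a finite limit u_i as t → −∞. Then (u_i)_{i∈I} satisfies the stationary Bellman equation: −r u_i + H(i, (u_j − u_i)_{j∈V(i)}) = 0 for all i ∈ I. -/
open Set Filter Topology

lemma aux_nonpos {T c L : ℝ} {f g : ℝ → ℝ}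
    (hf : ∀ t ∈ Iic T, HasDerivWithinAt f (g t) (Iic T) t)
    (hg : Tendsto g atBot (𝓝 c))
    (hL : Tendsto f atBot (𝓝 L)) : c ≤ 0 := by
  by_contra hc
  push_neg at hc
  obtain ⟨a, ha⟩ := eventually_atBot.1 (hg.eventually (lt_mem_nhds (show c/2 < c by linarith)))
  set t0 := min a T with ht0
  have ht0T : t0 ≤ T := min_le_right a T
  have ht0a : t0 ≤ a := min_le_left a T
  set φ : ℝ → ℝ := fun t => f t - c/2 * t with hφ
  have hmono : MonotoneOn φ (Iic t0) := by
    apply monotoneOn_of_hasDerivWithinAt_nonneg (convex_Iic t0)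
      (f' := fun t => g t - c/2)
    · intro x hx
      exact (((hf x (le_trans hx ht0T)).continuousWithinAt).mono
        (Iic_subset_Iic.2 ht0T)).sub (continuous_const.mul continuous_id).continuousWithinAt
    · intro x hx
      rw [interior_Iic] at hx
      have hxT : x ∈ Iic T := le_trans hx.le ht0T
      have h1 : HasDerivWithinAt f (g x) (interior (Iic t0)) x := by
        rw [interior_Iic]
        exact (hf x hxT).mono fun y hy => le_trans hy.le ht0T
      have h2 : HasDerivWithinAt (fun t => c/2 * t) (c/2) (interior (Iic t0)) x := by
        simpa using ((hasDerivAt_id x).const_mul (c/2)).hasDerivWithinAt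
      exact h1.sub h2
    · intro x hx
      rw [interior_Iic] at hx
      have := ha x (le_trans hx.le ht0a)
      linarith
  have hbound : ∀ᶠ s in atBot, f s ≤ φ t0 + c/2 * s := by
    filter_upwards [eventually_le_atBot t0] with s hs
    have := hmono (mem_Iic.2 hs) (mem_Iic.2 le_rfl) hs
    simp only [hφ] at this ⊢
    linarith
  have hbot : Tendsto (fun s => φ t0 + c/2 * s) atBot atBot :=
    tendsto_atBot_add_const_left _ _
      (tendsto_id.const_mul_atBot (by linarith : (0:ℝ) < c/2))
  have : Tendsto f atBot atBot := tendsto_atBot_mono' atBot hbound hbot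
  exact not_tendsto_atBot_of_tendsto_nhds hL this

lemma aux_zero {T c L : ℝ} {f g : ℝ → ℝ}
    (hf : ∀ t ∈ Iic T, HasDerivWithinAt f (g t) (Iic T) t)
    (hg : Tendsto g atBot (𝓝 c))
    (hL : Tendsto f atBot (𝓝 L)) : c = 0 := by
  refine le_antisymm (aux_nonpos hf hg hL) ?_
  have h1 : ∀ t ∈ Iic T, HasDerivWithinAt (fun s => -f s) (-g t) (Iic T) t :=
    fun t ht => (hf t ht).neg
  have := aux_nonpos h1 hg.neg hL.neg
  linarith

/-- If a solution `V` of the finite-horizon Hamilton–Jacobi equation on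
`(−∞, T]` converges, componentwise, to a finite limit `u` as `t → −∞`, then `u` solves the
stationary Bellman equation `−r u_i + H(i, (u_j − u_i)_{j∈V(i)}) = 0`. -/
theorem convergence_to_stationary
    (N : ℕ) (V : Fin N → Finset (Fin N)) (hV : ∀ i, i ∉ V i)
    (H : (i : Fin N) → (↥(V i) → ℝ) → ℝ)
    (hcont : ∀ i, Continuous (H i))
    (r : ℝ) (hr : 0 < r) (T : ℝ)
    (W : Fin N → ℝ → ℝ)
    (hW : ∀ i, ∀ t ∈ Iic T,
      HasDerivWithinAt (W i)
        (r * W i t - H i (fun j => W j.1 t - W i t)) (Iic T) t)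
    (u : Fin N → ℝ)
    (hlim : ∀ i, Tendsto (W i) atBot (𝓝 (u i))) :
    ∀ i, -(r * u i) + H i (fun j => u j.1 - u i) = 0 := by
  intro i
  have hargs : Tendsto (fun t => (fun j : ↥(V i) => W j.1 t - W i t)) atBot
      (𝓝 (fun j : ↥(V i) => u j.1 - u i)) := by
    rw [tendsto_pi_nhds]
    exact fun j => (hlim j.1).sub (hlim i)
  have hg : Tendsto (fun t => r * W i t - H i (fun j => W j.1 t - W i t)) atBot
      (𝓝 (r * u i - H i (fun j => u j.1 - u i))) :=
    (tendsto_const_nhds.mul (hlim i)).sub (((hcont i).tendsto _).comp hargs)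
  have := aux_zero (hW i) hg (hlim i)
  linarith
end

section
/- Comparison for the discounted stationary equation: let ε > 0 and let (v_i)_{i∈I} and (w_i)_{i∈I} be real numbers such that for all i ∈ I: −ε v_i + H(i, (v_j − v_i)_{j∈V(i)}) ≥ −ε w_i + H(i, (w_j − w_i)_{j∈V(i)}). Then v_i ≤ w_i for all i ∈ I. -/
open Set Filter Topology

/-- Comparison for the discounted stationary equation: if `ε > 0` and
`−ε v_i + H(i,(v_j−v_i)_j) ≥ −ε w_i + H(i,(w_j−w_i)_j)` for all `i`, then `v_i ≤ w_i`. -/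
theorem stationary_comparison
    (N : ℕ) (V : Fin N → Finset (Fin N)) (hV : ∀ i, i ∉ V i)
    (H : (i : Fin N) → (↥(V i) → ℝ) → ℝ)
    (hmono : ∀ (i : Fin N) (p p' : ↥(V i) → ℝ), (∀ j, p' j ≤ p j) → H i p' ≤ H i p)
    (ε : ℝ) (hε : 0 < ε)
    (v w : Fin N → ℝ)
    (h : ∀ i, -(ε * w i) + H i (fun j => w j.1 - w i)
      ≤ -(ε * v i) + H i (fun j => v j.1 - v i)) :
    ∀ i, v i ≤ w i := by
  intro i
  haveI : Nonempty (Fin N) := ⟨i⟩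
  obtain ⟨i₀, hi₀⟩ := Finite.exists_max (fun k => v k - w k)
  have key : H i₀ (fun j => v j.1 - v i₀) ≤ H i₀ (fun j => w j.1 - w i₀) := by
    apply hmono
    intro j
    have := hi₀ j.1
    linarith
  have h0 := h i₀
  have hvw : v i₀ ≤ w i₀ := by nlinarith
  have := hi₀ i
  linarith
end

section
/- Uniqueness of the ergodic constant: let η, μ ∈ ℝ and let (v_i)_{i∈I} and (w_i)_{i∈I} be real numbers such that for all i ∈ I: −η + H(i, (v_j − v_i)_{j∈V(i)}) = 0 and −μ + H(i, (w_j − w_i)_{j∈V(i)}) = 0. Then η = μ. -/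
open Set Filter Topology

lemma ergodic_constant_le
    (N : ℕ) (hN : 0 < N) (V : Fin N → Finset (Fin N))
    (H : (i : Fin N) → (↥(V i) → ℝ) → ℝ)
    (hmono : ∀ (i : Fin N) (p p' : ↥(V i) → ℝ), (∀ j, p' j ≤ p j) → H i p' ≤ H i p)
    (η μ : ℝ) (v w : Fin N → ℝ)
    (hv : ∀ i, -η + H i (fun j => v j.1 - v i) = 0)
    (hw : ∀ i, -μ + H i (fun j => w j.1 - w i) = 0) :
    η ≤ μ := by
  haveI : Nonempty (Fin N) := ⟨⟨0, hN⟩⟩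
  obtain ⟨i, -, hi⟩ := Finset.exists_max_image Finset.univ (fun i => v i - w i)
    ⟨Classical.arbitrary (Fin N), Finset.mem_univ _⟩
  have hη : η = H i (fun j => v j.1 - v i) := by linarith [hv i]
  have hμ : μ = H i (fun j => w j.1 - w i) := by linarith [hw i]
  rw [hη, hμ]
  apply hmono
  intro j
  have := hi j.1 (Finset.mem_univ _)
  linarith

/-- Uniqueness of the ergodic constant: if `−η + H(i,(v_j−v_i)_j) = 0` and
`−μ + H(i,(w_j−w_i)_j) = 0` for all `i`, then `η = μ`. -/
theorem ergodic_constant_unique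
    (N : ℕ) (hN : 0 < N) (V : Fin N → Finset (Fin N)) (hV : ∀ i, i ∉ V i)
    (H : (i : Fin N) → (↥(V i) → ℝ) → ℝ)
    (hmono : ∀ (i : Fin N) (p p' : ↥(V i) → ℝ), (∀ j, p' j ≤ p j) → H i p' ≤ H i p)
    (η μ : ℝ) (v w : Fin N → ℝ)
    (hv : ∀ i, -η + H i (fun j => v j.1 - v i) = 0)
    (hw : ∀ i, -μ + H i (fun j => w j.1 - w i) = 0) :
    η = μ := by
  exact le_antisymm
    (ergodic_constant_le N hN V H hmono η μ v w hv hw)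
    (ergodic_constant_le N hN V H hmono μ η w v hw hv)
end

section
/- Uniqueness up to constants for the ergodic equation: assume each H(i,·) is increasing with respect to each coordinate. Let γ ∈ ℝ and let (v_i)_{i∈I} and (w_i)_{i∈I} be real numbers such that for all i ∈ I: −γ + H(i, (v_j − v_i)_{j∈V(i)}) = 0 and −γ + H(i, (w_j − w_i)_{j∈V(i)}) = 0. Then there exists a constant C ∈ ℝ such that w_i = v_i + C for all i ∈ I. -/
open Set Filter Topology

/-- Uniqueness up to constants for the ergodic equation on a connected graph,
when each `H(i,·)` is increasing with respect to each coordinate: any two solutions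
`(v_i)`, `(w_i)` of `−γ + H(i,(·_j − ·_i)_{j∈V(i)}) = 0` differ by a constant. -/
theorem ergodic_solution_unique_up_to_constant
    (N : ℕ) (V : Fin N → Finset (Fin N)) (hV : ∀ i, i ∉ V i)
    (hconn : ∀ i j : Fin N, Relation.ReflTransGen (fun a b => b ∈ V a) i j)
    (H : (i : Fin N) → (↥(V i) → ℝ) → ℝ)
    (hstrict : ∀ (i : Fin N) (p p' : ↥(V i) → ℝ),
      (∀ j, p' j ≤ p j) → (∃ k, p' k < p k) → H i p' < H i p)
    (γ : ℝ) (v w : Fin N → ℝ)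
    (hv : ∀ i, -γ + H i (fun j => v j.1 - v i) = 0)
    (hw : ∀ i, -γ + H i (fun j => w j.1 - w i) = 0) :
    ∃ C : ℝ, ∀ i, w i = v i + C := by
  rcases Nat.eq_zero_or_pos N with h0 | hN
  · exact ⟨0, fun i => absurd i.isLt (by omega)⟩
  set u := fun i => w i - v i with hu
  obtain ⟨i0, -, hmax⟩ := Finset.exists_max_image Finset.univ u ⟨⟨0, hN⟩, Finset.mem_univ _⟩
  have key : ∀ i, u i = u i0 → ∀ j ∈ V i, u j = u i0 := by
    intro i hi j hj
    by_contra hne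
    have hjlt : u j < u i0 := lt_of_le_of_ne (hmax j (Finset.mem_univ _)) hne
    have hle : ∀ k : V i, (w k.1 - w i) ≤ (v k.1 - v i) := by
      intro k
      have hk := hmax k.1 (Finset.mem_univ _)
      simp only [hu] at hk hi
      linarith
    have hlt : ∃ k : V i, (w k.1 - w i) < (v k.1 - v i) := by
      refine ⟨⟨j, hj⟩, ?_⟩
      simp only [hu] at hjlt hi
      linarith
    have hstep := hstrict i (fun k => v k.1 - v i) (fun k => w k.1 - w i) hle hlt
    have h1 := hv i
    have h2 := hw i
    linarith
  have all : ∀ j, u j = u i0 := by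
    intro j
    induction hconn i0 j with
    | refl => rfl
    | tail _ hstep ih => exact key _ ih _ hstep
  exact ⟨w i0 - v i0, fun i => by have := all i; simp only [hu] at this; linarith⟩
end

section
/- Boundedness of the de-drifted value function: let g : I → ℝ, let γ ∈ ℝ and (ξ_i)_{i∈I} solve the ergodic equation −γ + H(i, (ξ_j − ξ_i)_{j∈V(i)}) = 0 for all i ∈ I, and let U = (U_i)_{i∈I} be a continuously differentiable function on [0,∞) satisfying −(d/dt)U_i(t) + H(i, (U_j(t) − U_i(t))_{j∈V(i)}) = 0 for all (i,t) ∈ I × [0,∞) with U_i(0) = g(i). Set C₁ = min_{j∈I}(g(j) − ξ_j) and C₂ = max_{j∈I}(g(j) − ξ_j). Then for all (i,t) ∈ I × [0,∞): γ t + ξ_i + C₁ ≤ U_i(t) ≤ γ t + ξ_i + C₂. In particular the function v̂_i(t) = U_i(t) − γ t is bounded. -/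
open Set Filter Topology


lemma aux_max_bound {N : ℕ} [Nonempty (Fin N)] (f d : Fin N → ℝ → ℝ)
    (hf : ∀ i, ∀ t ∈ Ici (0:ℝ), HasDerivWithinAt (f i) (d i t) (Ici (0:ℝ)) t)
    (hd : ∀ t ∈ Ici (0:ℝ), ∀ i, (∀ j, f j t ≤ f i t) → d i t ≤ 0)
    (C : ℝ) (hC : ∀ j, f j 0 ≤ C) :
    ∀ i, ∀ t ∈ Ici (0:ℝ), f i t ≤ C := by
  have ne : (Finset.univ : Finset (Fin N)).Nonempty := Finset.univ_nonempty
  set G : ℝ → ℝ := fun t => Finset.univ.sup' ne (fun j => f j t) with hGdef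
  suffices h : ∀ t ∈ Ici (0:ℝ), G t ≤ G 0 by
    intro i t ht
    have h1 : f i t ≤ G t := Finset.le_sup' (fun j => f j t) (Finset.mem_univ i)
    have h2 : G 0 ≤ C := Finset.sup'_le ne _ (fun j _ => hC j)
    linarith [h t ht]
  by_contra hcon
  push_neg at hcon
  obtain ⟨t₁, ht₁, hG1⟩ := hcon
  have ht₁0 : 0 < t₁ := by
    rcases lt_or_eq_of_le (mem_Ici.mp ht₁) with h | h
    · exact h
    · exact absurd hG1 (by rw [← h]; simp)
  set ε : ℝ := (G t₁ - G 0) / (2 * t₁) with hεdef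
  have hε : 0 < ε := by
    apply div_pos (by linarith) (by linarith)
  set q : Fin N → ℝ → ℝ := fun i t => f i t - ε * t with hqdef
  have hq : ∀ i, ∀ t ∈ Ici (0:ℝ), HasDerivWithinAt (q i) (d i t - ε) (Ici (0:ℝ)) t := by
    intro i t ht
    have h := (hf i t ht).sub (((hasDerivWithinAt_id t (Ici (0:ℝ))).const_mul ε))
    simp only [mul_one] at h
    exact h
  set Q : ℝ → ℝ := fun t => Finset.univ.sup' ne (fun j => q j t) with hQdef
  have hQG : ∀ t, Q t = G t - ε * t := by
    intro t
    apply le_antisymm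
    · apply Finset.sup'_le
      intro j _
      have := Finset.le_sup' (fun j => f j t) (Finset.mem_univ j)
      simp only [hqdef]
      linarith [this]
    · obtain ⟨j, _, hj⟩ := Finset.exists_mem_eq_sup' ne (fun j => f j t)
      have : q j t ≤ Q t := Finset.le_sup' (fun j => q j t) (Finset.mem_univ j)
      simp only [hqdef] at this
      show (Finset.univ.sup' ne fun j => f j t) - ε * t ≤ Q t
      rw [hj]
      exact this
  have hεt₁ : ε * t₁ = (G t₁ - G 0) / 2 := by
    rw [hεdef]; field_simp
  have hQ01 : Q 0 < Q t₁ := by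
    rw [hQG, hQG, hεt₁]; simp; linarith
  have hQcont : ContinuousOn Q (Ici (0:ℝ)) := by
    apply ContinuousOn.finset_sup'_apply ne
    intro i _
    intro t ht
    exact (hq i t ht).continuousWithinAt
  set S : Set ℝ := Icc 0 t₁ ∩ Q ⁻¹' (Iic (Q 0)) with hSdef
  have hS_closed : IsClosed S :=
    (hQcont.mono Icc_subset_Ici_self).preimage_isClosed_of_isClosed isClosed_Icc isClosed_Iic
  have hS_ne : S.Nonempty := ⟨0, ⟨le_refl 0, ht₁0.le⟩, Set.mem_preimage.mpr (mem_Iic.mpr le_rfl)⟩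
  have hS_bdd : BddAbove S := ⟨t₁, fun x hx => hx.1.2⟩
  set ts : ℝ := sSup S with htsdef
  have hts_mem : ts ∈ S := hS_closed.csSup_mem hS_ne hS_bdd
  have hts0 : (0:ℝ) ≤ ts := hts_mem.1.1
  have hts1 : ts < t₁ := lt_of_le_of_ne hts_mem.1.2 (by
    intro h; have := hts_mem.2; rw [h] at this; exact absurd this (not_le.mpr hQ01))
  have hQts : Q ts ≤ Q 0 := hts_mem.2
  have hgt : ∀ t, ts < t → t ≤ t₁ → Q 0 < Q t := by
    intro t h1 h2
    by_contra hle
    push_neg at hle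
    have : t ∈ S := ⟨⟨by linarith, h2⟩, hle⟩
    exact absurd (le_csSup hS_bdd this) (not_le.mpr h1)
  -- sequence
  set u : ℕ → ℝ := fun n => ts + (t₁ - ts) / (n + 1) with hudef
  have hu_gt : ∀ n, ts < u n := by
    intro n
    have : 0 < (t₁ - ts) / ((n:ℝ) + 1) := div_pos (by linarith) (by positivity)
    simp only [hudef]; linarith
  have hu_le : ∀ n, u n ≤ t₁ := by
    intro n
    have h1 : (t₁ - ts) / ((n:ℝ) + 1) ≤ t₁ - ts :=
      div_le_self (by linarith) (by linarith [Nat.cast_nonneg (α := ℝ) n])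
    simp only [hudef]; linarith
  have hu_tendsto : Tendsto u atTop (𝓝 ts) := by
    have h0 : Tendsto (fun n : ℕ => (t₁ - ts) * (1 / ((n:ℝ) + 1))) atTop (𝓝 ((t₁ - ts) * 0)) :=
      tendsto_one_div_add_atTop_nhds_zero_nat.const_mul _
    have : Tendsto (fun n : ℕ => ts + (t₁ - ts) * (1 / ((n:ℝ) + 1))) atTop (𝓝 (ts + (t₁ - ts) * 0)) :=
      tendsto_const_nhds.add h0
    simpa [hudef, mul_one_div, div_eq_mul_inv] using this
  have hidx : ∀ n, ∃ i : Fin N, Q (u n) = q i (u n) := by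
    intro n
    obtain ⟨i, _, hi⟩ := Finset.exists_mem_eq_sup' ne (fun j => q j (u n))
    exact ⟨i, hi⟩
  choose idx hidx using hidx
  obtain ⟨i, hinf⟩ := Finite.exists_infinite_fiber idx
  have hfreq : ∃ᶠ n in atTop, idx n = i := Nat.frequently_atTop_iff_infinite.2 (by simpa [Set.preimage, Set.infinite_coe_iff] using Set.infinite_coe_iff.mp hinf)
  set L : Filter ℕ := atTop ⊓ 𝓟 {n | idx n = i} with hLdef
  have hLne : L.NeBot := frequently_iff_neBot.mp hfreq
  have hmemL : {n | idx n = i} ∈ L := mem_inf_of_right (mem_principal_self _)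
  have huL : Tendsto u L (𝓝 ts) := hu_tendsto.mono_left inf_le_left
  have huL' : Tendsto u L (𝓝[Ici 0 \ {ts}] ts) := by
    apply tendsto_nhdsWithin_of_tendsto_nhds_of_eventually_within _ huL
    apply Eventually.of_forall
    intro n
    exact ⟨le_trans hts0 (hu_gt n).le, fun h => absurd (h : u n = ts) (hu_gt n).ne'⟩
  have hts_mem' : ts ∈ Ici (0:ℝ) := hts0
  have hslope : Tendsto (fun n => slope (q i) ts (u n)) L (𝓝 (d i ts - ε)) :=
    (hasDerivWithinAt_iff_tendsto_slope.mp (hq i ts hts_mem')).comp huL'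
  -- along L, slope is positive
  have hQu : ∀ n, Q 0 < Q (u n) := fun n => hgt (u n) (hu_gt n) (hu_le n)
  have hqits : q i ts ≤ Q ts := Finset.le_sup' (fun j => q j ts) (Finset.mem_univ i)
  have hev : ∀ᶠ n in L, (0:ℝ) ≤ slope (q i) ts (u n) := by
    filter_upwards [hmemL] with n hn
    have h1 : q i (u n) = Q (u n) := by rw [← hn]; exact (hidx n).symm
    have h2 : Q 0 < q i (u n) := h1 ▸ hQu n
    have h3 : q i ts < q i (u n) := by linarith
    rw [slope_def_field]
    exact le_of_lt (div_pos (by linarith) (by linarith [hu_gt n]))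
  have hd_ge : 0 ≤ d i ts - ε := ge_of_tendsto hslope hev
  -- i achieves the max of f at ts
  have hqiu : Tendsto (fun n => q i (u n)) L (𝓝 (q i ts)) := by
    have hcont : ContinuousWithinAt (q i) (Ici 0) ts := (hq i ts hts_mem').continuousWithinAt
    apply hcont.tendsto.comp
    apply tendsto_nhdsWithin_of_tendsto_nhds_of_eventually_within _ huL
    exact Eventually.of_forall fun n => le_trans hts0 (hu_gt n).le
  have hqi_ge : Q 0 ≤ q i ts := by
    apply ge_of_tendsto hqiu
    filter_upwards [hmemL] with n hn
    have h1 : q i (u n) = Q (u n) := by rw [← hn]; exact (hidx n).symm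
    exact le_of_lt (h1 ▸ hQu n)
  have hmax : ∀ j, f j ts ≤ f i ts := by
    intro j
    have h1 : q j ts ≤ Q ts := Finset.le_sup' (fun j => q j ts) (Finset.mem_univ j)
    have h2 : q j ts ≤ q i ts := by linarith
    simp only [hqdef] at h2
    linarith
  have := hd ts hts_mem' i hmax
  linarith

/-- Boundedness of the de-drifted value function: if `(γ, ξ)` solves the
ergodic equation and `U` solves `−(d/dt)U_i + H(i,(U_j−U_i)_j) = 0` on `[0,∞)` with
`U_i(0) = g(i)`, then with `C₁ = min_j (g(j)−ξ_j)` and `C₂ = max_j (g(j)−ξ_j)` we have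
`γt + ξ_i + C₁ ≤ U_i(t) ≤ γt + ξ_i + C₂`; in particular `t ↦ U_i(t) − γt` is bounded. -/
theorem de_drifted_value_bounded
    (N : ℕ) (V : Fin N → Finset (Fin N)) (hV : ∀ i, i ∉ V i)
    (H : (i : Fin N) → (↥(V i) → ℝ) → ℝ)
    (hmono : ∀ (i : Fin N) (p p' : ↥(V i) → ℝ), (∀ j, p' j ≤ p j) → H i p' ≤ H i p)
    (g : Fin N → ℝ) (γ : ℝ) (ξ : Fin N → ℝ)
    (hergo : ∀ i, -γ + H i (fun j => ξ j.1 - ξ i) = 0)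
    (U : Fin N → ℝ → ℝ)
    (hU : ∀ i, ∀ t ∈ Ici (0 : ℝ),
      HasDerivWithinAt (U i) (H i (fun j => U j.1 t - U i t)) (Ici (0 : ℝ)) t)
    (hU0 : ∀ i, U i 0 = g i)
    (C₁ C₂ : ℝ)
    (hC₁ : IsLeast (Set.range fun j => g j - ξ j) C₁)
    (hC₂ : IsGreatest (Set.range fun j => g j - ξ j) C₂) :
    (∀ i, ∀ t ∈ Ici (0 : ℝ),
      γ * t + ξ i + C₁ ≤ U i t ∧ U i t ≤ γ * t + ξ i + C₂) ∧
    (∃ M : ℝ, ∀ i, ∀ t ∈ Ici (0 : ℝ), |U i t - γ * t| ≤ M) := by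
  obtain ⟨j₀, -⟩ := hC₂.1
  have : Nonempty (Fin N) := ⟨j₀⟩
  have hHγ : ∀ i, H i (fun j => ξ j.1 - ξ i) = γ := fun i => by linarith [hergo i]
  -- upper bound
  have hupper : ∀ i, ∀ t ∈ Ici (0:ℝ), U i t - (γ * t + ξ i) ≤ C₂ := by
    apply aux_max_bound (f := fun i t => U i t - (γ * t + ξ i))
      (d := fun i t => H i (fun j => U j.1 t - U i t) - γ)
    · intro i t ht
      have h1 : HasDerivWithinAt (fun t => γ * t + ξ i) γ (Ici (0:ℝ)) t := by
        simpa using ((hasDerivWithinAt_id t (Ici (0:ℝ))).const_mul γ).add_const (ξ i)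
      exact (hU i t ht).sub h1
    · intro t ht i hi
      have key : H i (fun j => U j.1 t - U i t) ≤ H i (fun j => ξ j.1 - ξ i) := by
        apply hmono
        intro j
        have := hi j.1
        linarith
      rw [hHγ i] at key
      linarith
    · intro j
      have : g j - ξ j ≤ C₂ := hC₂.2 ⟨j, rfl⟩
      simp [hU0 j]
      linarith
  -- lower bound
  have hlower : ∀ i, ∀ t ∈ Ici (0:ℝ), (γ * t + ξ i) - U i t ≤ -C₁ := by
    apply aux_max_bound (f := fun i t => (γ * t + ξ i) - U i t)
      (d := fun i t => γ - H i (fun j => U j.1 t - U i t))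
    · intro i t ht
      have h1 : HasDerivWithinAt (fun t => γ * t + ξ i) γ (Ici (0:ℝ)) t := by
        simpa using ((hasDerivWithinAt_id t (Ici (0:ℝ))).const_mul γ).add_const (ξ i)
      exact h1.sub (hU i t ht)
    · intro t ht i hi
      have key : H i (fun j => ξ j.1 - ξ i) ≤ H i (fun j => U j.1 t - U i t) := by
        apply hmono
        intro j
        have := hi j.1
        linarith
      rw [hHγ i] at key
      linarith
    · intro j
      have : C₁ ≤ g j - ξ j := hC₁.2 ⟨j, rfl⟩
      simp [hU0 j]
      linarith
  have hbound : ∀ i, ∀ t ∈ Ici (0:ℝ),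
      γ * t + ξ i + C₁ ≤ U i t ∧ U i t ≤ γ * t + ξ i + C₂ := by
    intro i t ht
    constructor
    · linarith [hlower i t ht]
    · linarith [hupper i t ht]
  refine ⟨hbound, ?_⟩
  have ne : (Finset.univ : Finset (Fin N)).Nonempty := Finset.univ_nonempty
  refine ⟨(Finset.univ.sup' ne fun i => |ξ i|) + max |C₁| |C₂|, ?_⟩
  intro i t ht
  obtain ⟨h1, h2⟩ := hbound i t ht
  have h3 : |ξ i| ≤ Finset.univ.sup' ne fun i => |ξ i| :=
    Finset.le_sup' (fun i => |ξ i|) (Finset.mem_univ i)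
  have h4 := neg_abs_le (ξ i)
  have h5 := le_abs_self (ξ i)
  have h6 := neg_abs_le C₁
  have h7 := le_abs_self C₂
  have h8 : |C₁| ≤ max |C₁| |C₂| := le_max_left _ _
  have h9 : |C₂| ≤ max |C₁| |C₂| := le_max_right _ _
  rw [abs_le]
  constructor <;> linarith
end

section
/- Comparison principle for the ergodic-shifted forward equation: let γ ∈ ℝ, s ≥ 0, and let (y̲_i)_{i∈I} and (y̅_i)_{i∈I} be continuously differentiable functions on [s,∞) such that for all (i,t) ∈ I × [s,∞): −(d/dt)y̲_i(t) − γ + H(i, (y̲_j(t) − y̲_i(t))_{j∈V(i)}) ≥ 0 and −(d/dt)y̅_i(t) − γ + H(i, (y̅_j(t) − y̅_i(t))_{j∈V(i)}) ≤ 0, and such that y̲_i(s) ≤ y̅_i(s) for all i ∈ I. Then y̲_i(t) ≤ y̅_i(t) for all (i,t) ∈ I × [s,∞). -/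
open Set Filter Topology

/-- Comparison principle for the ergodic-shifted forward equation on `[s,∞)`:
a subsolution which starts below a supersolution at time `s` stays below it for all `t ≥ s`. -/
theorem forward_comparison_principle
    (N : ℕ) (V : Fin N → Finset (Fin N)) (hV : ∀ i, i ∉ V i)
    (H : (i : Fin N) → (↥(V i) → ℝ) → ℝ)
    (hmono : ∀ (i : Fin N) (p p' : ↥(V i) → ℝ), (∀ j, p' j ≤ p j) → H i p' ≤ H i p)
    (γ : ℝ) (s : ℝ) (hs : 0 ≤ s)
    (yl yu yl' yu' : Fin N → ℝ → ℝ)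
    (hyl : ∀ i, ∀ t ∈ Ici s, HasDerivWithinAt (yl i) (yl' i t) (Ici s) t)
    (hyl'c : ∀ i, ContinuousOn (yl' i) (Ici s))
    (hyu : ∀ i, ∀ t ∈ Ici s, HasDerivWithinAt (yu i) (yu' i t) (Ici s) t)
    (hyu'c : ∀ i, ContinuousOn (yu' i) (Ici s))
    (hsub : ∀ i, ∀ t ∈ Ici s,
      0 ≤ -yl' i t - γ + H i (fun j => yl j.1 t - yl i t))
    (hsup : ∀ i, ∀ t ∈ Ici s,
      -yu' i t - γ + H i (fun j => yu j.1 t - yu i t) ≤ 0)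
    (hinit : ∀ i, yl i s ≤ yu i s) :
    ∀ i, ∀ t ∈ Ici s, yl i t ≤ yu i t := by
  have key : ∀ ε : ℝ, 0 < ε → ∀ i, ∀ t ∈ Ici s, yl i t - yu i t < ε * (t - s + 1) := by
    intro ε hε
    by_contra hcon
    push_neg at hcon
    obtain ⟨i0, t0, ht0, hge⟩ := hcon
    set w : Fin N → ℝ → ℝ := fun i t => yl i t - yu i t - ε * (t - s + 1) with hwdef
    have hwc : ∀ i, ContinuousOn (w i) (Ici s) := by
      intro i
      have h1 : ContinuousOn (yl i) (Ici s) := fun t ht => (hyl i t ht).continuousWithinAt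
      have h2 : ContinuousOn (yu i) (Ici s) := fun t ht => (hyu i t ht).continuousWithinAt
      exact (h1.sub h2).sub (continuousOn_const.mul
        ((continuousOn_id.sub continuousOn_const).add continuousOn_const))
    set A : Set ℝ := ⋃ i : Fin N, {t ∈ Ici s | 0 ≤ w i t} with hAdef
    have hA_ne : A.Nonempty := by
      refine ⟨t0, mem_iUnion.2 ⟨i0, ht0, ?_⟩⟩
      simp only [hwdef]
      linarith
    have hA_sub : A ⊆ Ici s := by
      intro t ht
      obtain ⟨i, hti, -⟩ := mem_iUnion.1 ht
      exact hti
    have hA_bdd : BddBelow A := ⟨s, fun t ht => hA_sub ht⟩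
    have hA_closed : IsClosed A := by
      refine isClosed_iUnion_of_finite fun i => ?_
      have h := (hwc i).preimage_isClosed_of_isClosed (t := Ici (0:ℝ)) isClosed_Ici isClosed_Ici
      have heq : {t | t ∈ Ici s ∧ 0 ≤ w i t} = Ici s ∩ (w i) ⁻¹' Ici (0:ℝ) := by
        ext x; simp [Set.mem_Ici]
      rw [heq]; exact h
    set T : ℝ := sInf A with hTdef
    have hT_mem : T ∈ A := hA_closed.csInf_mem hA_ne hA_bdd
    obtain ⟨i, hTs, hwi⟩ := mem_iUnion.1 hT_mem
    have hTs : s ≤ T := hA_sub hT_mem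
    have hws : ∀ j, w j s < 0 := by
      intro j
      simp only [hwdef]
      have := hinit j
      nlinarith
    have hsT : s < T := by
      rcases lt_or_eq_of_le hTs with h | h
      · exact h
      · exfalso
        obtain ⟨j, -, hj⟩ := mem_iUnion.1 hT_mem
        rw [← h] at hj
        exact absurd hj (not_le.2 (hws j))
    have hbefore : ∀ t, s ≤ t → t < T → ∀ j, w j t < 0 := by
      intro t hst htT j
      by_contra hge'
      push_neg at hge'
      have : t ∈ A := mem_iUnion.2 ⟨j, hst, hge'⟩
      exact absurd (csInf_le hA_bdd this) (not_le.2 htT)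
    -- w j T ≤ 0 for all j, by continuity from the left
    have hwT_le : ∀ j, w j T ≤ 0 := by
      intro j
      have hcont : ContinuousWithinAt (w j) (Ici s) T := hwc j T (le_of_lt hsT)
      have hcont' : ContinuousWithinAt (w j) (Ioo s T) T :=
        hcont.mono (fun x hx => le_of_lt hx.1)
      have hne : (𝓝[Ioo s T] T).NeBot := by
        rw [← mem_closure_iff_nhdsWithin_neBot, closure_Ioo (ne_of_lt hsT)]
        exact ⟨le_of_lt hsT, le_refl T⟩
      have : w j T ∈ closure (Iio (0:ℝ) ∪ {w j T}) := by
        apply mem_closure_of_tendsto hcont'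
        filter_upwards [self_mem_nhdsWithin] with t ht
        exact Or.inl (hbefore t (le_of_lt ht.1) ht.2 j)
      rcases (closure_union (s := Iio (0:ℝ)) (t := {w j T}) ▸ this) with h | h
      · rw [closure_Iio] at h; exact h
      · -- fall back: use that w j T is a limit of negative values
        have : Tendsto (w j) (𝓝[Ioo s T] T) (𝓝 (w j T)) := hcont'
        have hle : ∀ᶠ t in 𝓝[Ioo s T] T, w j t ≤ 0 := by
          filter_upwards [self_mem_nhdsWithin] with t ht
          exact le_of_lt (hbefore t (le_of_lt ht.1) ht.2 j)
        exact le_of_tendsto this hle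
    have hwiT : w i T = 0 := le_antisymm (hwT_le i) hwi
    -- monotonicity gives H_l ≤ H_u at T
    have hHle : H i (fun j => yl j.1 T - yl i T) ≤ H i (fun j => yu j.1 T - yu i T) := by
      apply hmono
      intro j
      have h1 : w j.1 T ≤ 0 := hwT_le j.1
      simp only [hwdef] at h1 hwiT
      linarith
    -- derivative of w i at T is negative
    have hd : HasDerivWithinAt (w i) (yl' i T - yu' i T - ε) (Ici s) T := by
      have h3 : HasDerivWithinAt (fun t => ε * (t - s + 1)) ε (Ici s) T := by
        simpa using (((hasDerivWithinAt_id T (Ici s)).sub_const s).add_const 1).const_mul ε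
      exact ((hyl i T (le_of_lt hsT)).sub (hyu i T (le_of_lt hsT))).sub h3
    have hdneg : yl' i T - yu' i T - ε < 0 := by
      have h1 := hsub i T (le_of_lt hsT)
      have h2 := hsup i T (le_of_lt hsT)
      linarith
    -- contradiction via slope on the left
    have hd' : HasDerivWithinAt (w i) (yl' i T - yu' i T - ε) (Ioo s T) T :=
      hd.mono (fun x hx => le_of_lt hx.1)
    have hne : (𝓝[Ioo s T] T).NeBot := by
      rw [← mem_closure_iff_nhdsWithin_neBot, closure_Ioo (ne_of_lt hsT)]
      exact ⟨le_of_lt hsT, le_refl T⟩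
    have hslope := (hasDerivWithinAt_iff_tendsto_slope.1 hd')
    have hdiff : Ioo s T \ {T} = Ioo s T := by
      ext x
      constructor
      · rintro ⟨hx, -⟩; exact hx
      · intro hx; exact ⟨hx, ne_of_lt hx.2⟩
    rw [hdiff] at hslope
    have hev : ∀ᶠ t in 𝓝[Ioo s T] T, slope (w i) T t < 0 :=
      hslope.eventually_lt_const hdneg
    obtain ⟨t, htmem, hts⟩ := (hev.and self_mem_nhdsWithin).exists
    -- slope (w i) T t = (w i t - w i T)/(t - T) < 0, t < T so w i t > w i T = 0
    have htT : t < T := hts.2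
    have hslope_val : slope (w i) T t = (w i t - w i T) / (t - T) := by
      rw [slope_def_field]
    rw [hslope_val, hwiT, sub_zero] at htmem
    have hwt_pos : 0 < w i t := by
      have hne0 : t - T < 0 := by linarith
      rcases div_neg_iff.1 htmem with ⟨h1, -⟩ | ⟨-, h2⟩
      · exact h1
      · linarith
    exact absurd hwt_pos (not_lt.2 (le_of_lt (hbefore t (le_of_lt hts.1) htT i)))
  intro i t ht
  by_contra hlt
  push_neg at hlt
  have hC : (0:ℝ) < t - s + 1 := by
    have : s ≤ t := ht
    linarith
  have hε : 0 < (yl i t - yu i t) / (t - s + 1) := div_pos (by linarith) hC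
  have := key _ hε i t ht
  rw [div_mul_cancel₀ _ (ne_of_gt hC)] at this
  exact lt_irrefl _ this
end

section
/- Strong maximum principle: let γ ∈ ℝ, s ≥ 0, and let (y̲_i)_{i∈I} and (y̅_i)_{i∈I} be continuously differentiable functions on [s,∞) such that for all (i,t) ∈ I × [s,∞): −(d/dt)y̲_i(t) − γ + H(i, (y̲_j(t) − y̲_i(t))_{j∈V(i)}) = 0 and −(d/dt)y̅_i(t) − γ + H(i, (y̅_j(t) − y̅_i(t))_{j∈V(i)}) = 0. Assume y̲(s) ⪇ y̅(s), i.e. y̲_j(s) ≤ y̅_j(s) for all j ∈ I and y̲_i(s) < y̅_i(s) for at least one i ∈ I. Then y̲_i(t) < y̅_i(t) for all (i,t) ∈ I × (s,∞). -/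
open Set Filter Topology

lemma aux_deriv_nonpos_of_left_min {f : ℝ → ℝ} {d s t0 : ℝ} (h : s < t0)
    (hd : HasDerivAt f d t0) (hmin : ∀ t ∈ Set.Ioo s t0, f t0 ≤ f t) : d ≤ 0 := by
  rw [hasDerivAt_iff_tendsto_slope] at hd
  have hmono : 𝓝[<] t0 ≤ 𝓝[≠] t0 := nhdsWithin_mono _ fun x hx => ne_of_lt hx
  refine le_of_tendsto (hd.mono_left hmono) ?_
  filter_upwards [Ioo_mem_nhdsLT_of_mem (⟨h, le_refl _⟩ : t0 ∈ Set.Ioc s t0)] with t ht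
  rw [slope_def_field]
  exact div_nonpos_of_nonneg_of_nonpos (by linarith [hmin t ht]) (by linarith [ht.2])

/-- Strong maximum principle: if `y̲` and `y̅` both solve the ergodic-shifted
forward equation on `[s,∞)` on a connected graph with strictly increasing Hamiltonians, and
`y̲(s) ⪇ y̅(s)`, then `y̲_i(t) < y̅_i(t)` for all `i` and all `t > s`. -/
theorem strong_maximum_principle
    (N : ℕ) (V : Fin N → Finset (Fin N)) (hV : ∀ i, i ∉ V i)
    (hconn : ∀ i j : Fin N, Relation.ReflTransGen (fun a b => b ∈ V a) i j)
    (H : (i : Fin N) → (↥(V i) → ℝ) → ℝ)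
    (hlip : ∀ i, LocallyLipschitz (H i))
    (hstrict : ∀ (i : Fin N) (p p' : ↥(V i) → ℝ),
      (∀ j, p' j ≤ p j) → (∃ k, p' k < p k) → H i p' < H i p)
    (γ : ℝ) (s : ℝ) (hs : 0 ≤ s)
    (yl yu : Fin N → ℝ → ℝ)
    (hyl : ∀ i, ∀ t ∈ Ici s,
      HasDerivWithinAt (yl i)
        (H i (fun j => yl j.1 t - yl i t) - γ) (Ici s) t)
    (hyu : ∀ i, ∀ t ∈ Ici s,
      HasDerivWithinAt (yu i)
        (H i (fun j => yu j.1 t - yu i t) - γ) (Ici s) t)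
    (hinit_le : ∀ j, yl j s ≤ yu j s)
    (hinit_lt : ∃ i, yl i s < yu i s) :
    ∀ i, ∀ t ∈ Ioi s, yl i t < yu i t := by
  classical
  set z : Fin N → ℝ → ℝ := fun i t => yu i t - yl i t with hzdef
  -- weak monotonicity of H
  have hmono : ∀ (i : Fin N) (p p' : ↥(V i) → ℝ), (∀ j, p' j ≤ p j) → H i p' ≤ H i p := by
    intro i p p' hle
    by_cases hex : ∃ k, p' k < p k
    · exact (hstrict i p p' hle hex).le
    · push_neg at hex
      have : p' = p := funext fun j => le_antisymm (hle j) (hex j)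
      rw [this]
  -- continuity
  have hcontl : ∀ i, ContinuousOn (yl i) (Ici s) :=
    fun i t ht => ((hyl i t ht).differentiableWithinAt).continuousWithinAt
  have hcontu : ∀ i, ContinuousOn (yu i) (Ici s) :=
    fun i t ht => ((hyu i t ht).differentiableWithinAt).continuousWithinAt
  have hzcont : ∀ i, ContinuousOn (z i) (Ici s) := fun i => (hcontu i).sub (hcontl i)
  -- derivative of z
  have hzderiv : ∀ i, ∀ t ∈ Ici s, HasDerivWithinAt (z i)
      (H i (fun j => yu j.1 t - yu i t) - H i (fun j => yl j.1 t - yl i t)) (Ici s) t := by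
    intro i t ht
    have h := (hyu i t ht).sub (hyl i t ht)
    exact h.congr_deriv (by ring)
  -- Step 1: z ≥ 0 on Ici s
  have key1 : ∀ t ∈ Ici s, ∀ i, 0 ≤ z i t := by
    have keps : ∀ ε > (0:ℝ), ∀ t ∈ Ici s, ∀ i, 0 < z i t + ε * Real.exp (t - s) := by
      intro ε hε
      by_contra hcon
      push_neg at hcon
      obtain ⟨t, ht, i, hti⟩ := hcon
      set ζ : Fin N → ℝ → ℝ := fun i t => z i t + ε * Real.exp (t - s) with hζdef
      set B : Set ℝ := ⋃ i : Fin N, {u | u ∈ Ici s ∧ ζ i u ≤ 0} with hBdef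
      have hBne : B.Nonempty := ⟨t, mem_iUnion.mpr ⟨i, ht, hti⟩⟩
      have hζcont : ∀ i, ContinuousOn (ζ i) (Ici s) := by
        intro i
        exact (hzcont i).add (continuousOn_const.mul
          ((Real.continuous_exp.comp (continuous_id.sub continuous_const)).continuousOn))
      have hBclosed : IsClosed B := by
        refine isClosed_iUnion_of_finite fun i => ?_
        have h2 : IsClosed (Ici s ∩ ζ i ⁻¹' Iic (0:ℝ)) :=
          (hζcont i).preimage_isClosed_of_isClosed isClosed_Ici isClosed_Iic
        exact h2
      have hBbdd : BddBelow B := ⟨s, by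
        rintro u hu
        obtain ⟨i, hu1, -⟩ := mem_iUnion.mp hu
        exact hu1⟩
      set t0 := sInf B with ht0def
      have ht0B : t0 ∈ B := hBclosed.csInf_mem hBne hBbdd
      obtain ⟨i0, ht0s, ht0le⟩ := mem_iUnion.mp ht0B
      have hζs : ∀ j, 0 < ζ j s := by
        intro j
        have h1 : 0 ≤ z j s := sub_nonneg.mpr (hinit_le j)
        have h2 : 0 < ε * Real.exp (s - s) := by positivity
        simp only [hζdef]; linarith
      have hst0 : s < t0 := by
        rcases lt_or_eq_of_le (mem_Ici.mp ht0s) with h | h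
        · exact h
        · exact absurd ht0le (by rw [← h]; exact not_le.mpr (hζs i0))
      have hpos_before : ∀ u ∈ Ico s t0, ∀ j, 0 < ζ j u := by
        intro u hu j
        by_contra hle'
        push_neg at hle'
        have : u ∈ B := mem_iUnion.mpr ⟨j, hu.1, hle'⟩
        exact absurd (csInf_le hBbdd this) (not_le.mpr hu.2)
      have hζt0 : ∀ j, 0 ≤ ζ j t0 := by
        intro j
        have hca : ContinuousAt (ζ j) t0 :=
          ((hζcont j) t0 ht0s).continuousAt (Ici_mem_nhds hst0)
        refine ge_of_tendsto (hca.tendsto.mono_left nhdsWithin_le_nhds :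
          Tendsto (ζ j) (𝓝[<] t0) (𝓝 (ζ j t0))) ?_
        filter_upwards [Ioo_mem_nhdsLT_of_mem (⟨hst0, le_refl _⟩ : t0 ∈ Ioc s t0)] with u hu
        exact (hpos_before u ⟨hu.1.le, hu.2⟩ j).le
      have hζi0 : ζ i0 t0 = 0 := le_antisymm ht0le (hζt0 i0)
      -- derivative of ζ i0 at t0
      have hexp : HasDerivAt (fun u => ε * Real.exp (u - s)) (ε * Real.exp (t0 - s)) t0 := by
        have h1 : HasDerivAt (fun u : ℝ => u - s) 1 t0 := (hasDerivAt_id t0).sub_const s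
        have := (h1.exp).const_mul ε
        simpa using this
      have hderiv : HasDerivAt (ζ i0)
          ((H i0 (fun j => yu j.1 t0 - yu i0 t0) - H i0 (fun j => yl j.1 t0 - yl i0 t0))
            + ε * Real.exp (t0 - s)) t0 :=
        (((hzderiv i0 t0 ht0s).hasDerivAt (Ici_mem_nhds hst0)).add hexp)
      have hd0 : 0 ≤ H i0 (fun j => yu j.1 t0 - yu i0 t0)
          - H i0 (fun j => yl j.1 t0 - yl i0 t0) := by
        rw [sub_nonneg]
        refine hmono i0 _ _ fun j => ?_
        have h1 : 0 ≤ ζ j.1 t0 := hζt0 j.1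
        have h2 : ζ j.1 t0 - ζ i0 t0 =
            (yu j.1 t0 - yu i0 t0) - (yl j.1 t0 - yl i0 t0) := by
          simp only [hζdef, hzdef]; ring
        rw [hζi0] at h2
        linarith
      have hminle := aux_deriv_nonpos_of_left_min hst0 hderiv (fun u hu => by
        rw [hζi0]; exact (hpos_before u ⟨hu.1.le, hu.2⟩ i0).le)
      have := Real.exp_pos (t0 - s)
      nlinarith
    intro t ht i
    by_contra hneg
    push_neg at hneg
    have hexp := Real.exp_pos (t - s)
    have hδ : 0 < -(z i t) / Real.exp (t - s) := div_pos (by linarith) hexp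
    have := keps _ hδ t ht i
    rw [div_mul_cancel₀ _ (ne_of_gt hexp)] at this
    linarith
  -- Step 3: propagation to a node from a positive neighbor
  have key3 : ∀ a b : Fin N, b ∈ V a → (∀ u ∈ Ioi s, 0 < z b u) → ∀ u ∈ Ioi s, 0 < z a u := by
    intro a b hb hbpos u hu
    rcases eq_or_lt_of_le (key1 u (mem_Ici.mpr (le_of_lt hu)) a) with heq | hlt
    · exfalso
      have hst : s < u := hu
      have hderiv : HasDerivAt (z a)
          (H a (fun j => yu j.1 u - yu a u) - H a (fun j => yl j.1 u - yl a u)) u :=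
        (hzderiv a u hst.le).hasDerivAt (Ici_mem_nhds hst)
      have hdpos : 0 < H a (fun j => yu j.1 u - yu a u) - H a (fun j => yl j.1 u - yl a u) := by
        rw [sub_pos]
        refine hstrict a _ _ (fun j => ?_) ⟨⟨b, hb⟩, ?_⟩
        · have h1 : (0:ℝ) ≤ yu j.1 u - yl j.1 u := key1 u hst.le j.1
          have h2 : (0:ℝ) = yu a u - yl a u := heq
          linarith
        · have h1 : (0:ℝ) < yu b u - yl b u := hbpos u hu
          have h2 : (0:ℝ) = yu a u - yl a u := heq
          simp only
          linarith
      have hdle := aux_deriv_nonpos_of_left_min hst hderiv (fun v hv => by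
        rw [← heq]; exact key1 v (le_of_lt hv.1) a)
      linarith
    · exact hlt
  -- Step 2: persistence of strict positivity at a single node
  have key2 : ∀ a : Fin N, 0 < z a s → ∀ u ∈ Ioi s, 0 < z a u := by
    intro a ha t ht
    rcases eq_or_lt_of_le (key1 t (mem_Ici.mpr (le_of_lt ht)) a) with hzat | h
    · exfalso
      set B2 : Set ℝ := {u | u ∈ Icc s t ∧ z a u = 0} with hB2def
      have hB2closed : IsClosed B2 := by
        have h2 : IsClosed (Icc s t ∩ z a ⁻¹' {(0:ℝ)}) :=
          ((hzcont a).mono Icc_subset_Ici_self).preimage_isClosed_of_isClosed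
            isClosed_Icc isClosed_singleton
        exact h2
      have hB2ne : B2.Nonempty := ⟨t, ⟨le_of_lt ht, le_refl t⟩, hzat.symm⟩
      have hB2bdd : BddBelow B2 := ⟨s, fun u hu => hu.1.1⟩
      set t0 := sInf B2 with ht0def
      have ht0B : t0 ∈ B2 := hB2closed.csInf_mem hB2ne hB2bdd
      have ht0s : s ≤ t0 := ht0B.1.1
      have hzt0 : z a t0 = 0 := ht0B.2
      have hst0 : s < t0 := by
        rcases lt_or_eq_of_le ht0s with h' | h'
        · exact h'
        · rw [← h'] at hzt0; linarith
      have hbefore : ∀ u ∈ Ico s t0, 0 < z a u := by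
        intro u hu
        rcases eq_or_lt_of_le (key1 u hu.1 a) with h0 | h0
        · exfalso
          have hmem : u ∈ B2 := ⟨⟨hu.1, le_trans hu.2.le ht0B.1.2⟩, h0.symm⟩
          exact absurd (csInf_le hB2bdd hmem) (not_le.mpr hu.2)
        · exact h0
      obtain ⟨K, U, hU, hlipU⟩ := hlip a (fun j => yl j.1 t0 - yl a t0)
      have hyl_ca : ∀ i : Fin N, ContinuousAt (yl i) t0 :=
        fun i => ((hcontl i) t0 ht0s).continuousAt (Ici_mem_nhds hst0)
      have hza_ca : ContinuousAt (z a) t0 :=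
        ((hzcont a) t0 ht0s).continuousAt (Ici_mem_nhds hst0)
      have hpl_cont : ContinuousAt (fun u => (fun j : ↥(V a) => yl j.1 u - yl a u)) t0 :=
        continuousAt_pi' fun j => (hyl_ca j.1).sub (hyl_ca a)
      have hq_cont : ContinuousAt (fun u => (fun j : ↥(V a) => yl j.1 u - yl a u - z a u)) t0 :=
        continuousAt_pi' fun j => ((hyl_ca j.1).sub (hyl_ca a)).sub hza_ca
      have hev : ∀ᶠ u in 𝓝 t0, (fun j : ↥(V a) => yl j.1 u - yl a u) ∈ U ∧
          (fun j : ↥(V a) => yl j.1 u - yl a u - z a u) ∈ U := by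
        have e1 := hpl_cont.eventually_mem hU
        have e2 : ∀ᶠ u in 𝓝 t0, (fun j : ↥(V a) => yl j.1 u - yl a u - z a u) ∈ U := by
          refine hq_cont.eventually_mem ?_
          have : (fun j : ↥(V a) => yl j.1 t0 - yl a t0 - z a t0)
              = (fun j : ↥(V a) => yl j.1 t0 - yl a t0) := by
            funext j; rw [hzt0]; ring
          rw [this]; exact hU
        exact e1.and e2
      obtain ⟨δ, hδ, hball⟩ := Metric.eventually_nhds_iff.mp hev
      set t1 := max s (t0 - δ/2) with ht1def
      have ht1lt : t1 < t0 := max_lt hst0 (by linarith)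
      have ht1s : s ≤ t1 := le_max_left _ _
      have hint : ∀ u ∈ Icc t1 t0, dist u t0 < δ := by
        intro u hu
        have h3 : t0 - δ/2 ≤ t1 := le_max_right _ _
        rw [Real.dist_eq, abs_lt]
        constructor <;> [linarith [hu.1]; linarith [hu.2]]
      set g : ℝ → ℝ := fun u => z a u * Real.exp ((K:ℝ) * (u - t1)) with hgdef
      have hIccsub : Icc t1 t0 ⊆ Ici s := fun u hu => le_trans ht1s hu.1
      have hgcont : ContinuousOn g (Icc t1 t0) :=
        ((hzcont a).mono hIccsub).mul
          ((Real.continuous_exp.comp (continuous_const.mul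
            (continuous_id.sub continuous_const))).continuousOn)
      have hgderiv : ∀ x ∈ interior (Icc t1 t0),
          HasDerivAt g ((H a (fun j => yu j.1 x - yu a x) - H a (fun j => yl j.1 x - yl a x))
            * Real.exp ((K:ℝ) * (x - t1))
            + z a x * (Real.exp ((K:ℝ) * (x - t1)) * ((K:ℝ) * 1))) x := by
        intro x hx
        rw [interior_Icc] at hx
        have hxs : s < x := lt_of_le_of_lt ht1s hx.1
        have hdz : HasDerivAt (z a)
            (H a (fun j => yu j.1 x - yu a x) - H a (fun j => yl j.1 x - yl a x)) x :=
          (hzderiv a x hxs.le).hasDerivAt (Ici_mem_nhds hxs)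
        have hlin : HasDerivAt (fun u : ℝ => (K:ℝ) * (u - t1)) ((K:ℝ) * 1) x :=
          ((hasDerivAt_id x).sub_const t1).const_mul (K:ℝ)
        exact hdz.mul hlin.exp
      have hgmono : MonotoneOn g (Icc t1 t0) := by
        refine monotoneOn_of_deriv_nonneg (convex_Icc t1 t0) hgcont
          (fun x hx => ((hgderiv x hx).differentiableAt).differentiableWithinAt)
          (fun x hx => ?_)
        have hd := hgderiv x hx
        rw [hd.deriv]
        rw [interior_Icc] at hx
        have hxs : s < x := lt_of_le_of_lt ht1s hx.1
        have hx_mem : x ∈ Icc t1 t0 := ⟨hx.1.le, hx.2.le⟩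
        obtain ⟨hplU, hqU⟩ := hball (hint x hx_mem)
        have hzx : 0 ≤ z a x := key1 x hxs.le a
        have hdist : dist (fun j : ↥(V a) => yl j.1 x - yl a x)
            (fun j : ↥(V a) => yl j.1 x - yl a x - z a x) ≤ z a x := by
          refine (dist_pi_le_iff hzx).2 fun j => ?_
          rw [Real.dist_eq,
            show (yl j.1 x - yl a x) - (yl j.1 x - yl a x - z a x) = z a x by ring,
            abs_of_nonneg hzx]
        have hlips : dist (H a (fun j : ↥(V a) => yl j.1 x - yl a x))
            (H a (fun j : ↥(V a) => yl j.1 x - yl a x - z a x))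
            ≤ (K:ℝ) * dist (fun j : ↥(V a) => yl j.1 x - yl a x)
              (fun j : ↥(V a) => yl j.1 x - yl a x - z a x) :=
          hlipU.dist_le_mul _ hplU _ hqU
        have h5 : H a (fun j : ↥(V a) => yl j.1 x - yl a x)
            - H a (fun j : ↥(V a) => yl j.1 x - yl a x - z a x) ≤ (K:ℝ) * z a x := by
          refine le_trans (le_trans (le_abs_self _) ?_)
            (le_trans hlips (mul_le_mul_of_nonneg_left hdist K.coe_nonneg))
          rw [← Real.dist_eq]
        have h6 : H a (fun j : ↥(V a) => yl j.1 x - yl a x - z a x)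
            ≤ H a (fun j => yu j.1 x - yu a x) := by
          refine hmono a _ _ fun j => ?_
          have h7 : (0:ℝ) ≤ yu j.1 x - yl j.1 x := key1 x hxs.le j.1
          have h8 : z a x = yu a x - yl a x := rfl
          rw [h8]; linarith
        have hexp2 := Real.exp_pos ((K:ℝ) * (x - t1))
        have h9 : -((K:ℝ) * z a x) ≤ H a (fun j => yu j.1 x - yu a x)
            - H a (fun j => yl j.1 x - yl a x) := by linarith
        nlinarith [mul_le_mul_of_nonneg_right h9 hexp2.le]
      have hmono2 := hgmono (⟨le_refl t1, ht1lt.le⟩ : t1 ∈ Icc t1 t0)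
        (⟨ht1lt.le, le_refl t0⟩ : t0 ∈ Icc t1 t0) ht1lt.le
      have hz1 : 0 < z a t1 := hbefore t1 ⟨ht1s, ht1lt⟩
      have hgt1 : g t1 = z a t1 := by simp [hgdef]
      have hgt0 : g t0 = 0 := by simp [hgdef, hzt0]
      rw [hgt1, hgt0] at hmono2
      linarith
    · exact h
  -- Assembly
  obtain ⟨i0, hi0⟩ := hinit_lt
  have hbase : ∀ u ∈ Ioi s, 0 < z i0 u := key2 i0 (sub_pos.mpr hi0)
  intro j t ht
  have hall : ∀ x : Fin N, Relation.ReflTransGen (fun a b => b ∈ V a) x i0 →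
      ∀ u ∈ Ioi s, 0 < z x u := by
    intro x hx
    induction hx using Relation.ReflTransGen.head_induction_on with
    | refl => exact hbase
    | head h' h ih => exact key3 _ _ h' ih
  have hfin : (0:ℝ) < yu j t - yl j t := hall j (hconn j i0) t ht
  linarith
end

section
/- Nonexpansiveness of the solution flow in the sup-norm: let γ ∈ ℝ, let x, y ∈ ℝ^N, and let ŷ and ẑ be continuously differentiable functions on [0,∞) satisfying, for all (i,t) ∈ I × [0,∞), −(d/dt)ŷ_i(t) − γ + H(i, (ŷ_j(t) − ŷ_i(t))_{j∈V(i)}) = 0 and −(d/dt)ẑ_i(t) − γ + H(i, (ẑ_j(t) − ẑ_i(t))_{j∈V(i)}) = 0, with ŷ_i(0) = x_i and ẑ_i(0) = y_i for all i ∈ I. Then for all t ≥ 0: max_{i∈I} |ŷ_i(t) − ẑ_i(t)| ≤ max_{i∈I} |x_i − y_i|. -/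
open Set Filter Topology

lemma flow_key
    (N : ℕ) (V : Fin N → Finset (Fin N))
    (H : (i : Fin N) → (↥(V i) → ℝ) → ℝ)
    (hmono : ∀ (i : Fin N) (p p' : ↥(V i) → ℝ), (∀ j, p' j ≤ p j) → H i p' ≤ H i p)
    (γ : ℝ)
    (u v : Fin N → ℝ → ℝ)
    (hu : ∀ i, ∀ t ∈ Ici (0 : ℝ),
      HasDerivWithinAt (u i)
        (H i (fun j => u j.1 t - u i t) - γ) (Ici (0 : ℝ)) t)
    (hv : ∀ i, ∀ t ∈ Ici (0 : ℝ),
      HasDerivWithinAt (v i)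
        (H i (fun j => v j.1 t - v i t) - γ) (Ici (0 : ℝ)) t)
    (C : ℝ) (h0 : ∀ i, u i 0 - v i 0 ≤ C)
    (ε : ℝ) (hε : 0 < ε) :
    ∀ t ∈ Ici (0 : ℝ), ∀ i, u i t - v i t < C + ε + ε * t := by
  set g : Fin N → ℝ → ℝ := fun i t => u i t - v i t - (C + ε + ε * t) with hg
  have hgder : ∀ i, ∀ t ∈ Ici (0 : ℝ), HasDerivWithinAt (g i)
      ((H i (fun j => u j.1 t - u i t) - γ) - (H i (fun j => v j.1 t - v i t) - γ) - ε)
      (Ici (0 : ℝ)) t := by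
    intro i t ht
    have h1 : HasDerivWithinAt (fun t => C + ε + ε * t) (0 + ε * 1) (Ici (0:ℝ)) t :=
      (hasDerivWithinAt_const _ _ _).add ((hasDerivWithinAt_id _ _).const_mul ε)
    exact (((hu i t ht).sub (hv i t ht)).sub h1).congr_deriv (by ring)
  have hgcont : ∀ i, ContinuousOn (g i) (Ici (0 : ℝ)) := fun i t ht =>
    (hgder i t ht).continuousWithinAt
  -- the "bad" set
  set S : Set ℝ := ⋃ i, {t ∈ Ici (0:ℝ) | 0 ≤ g i t} with hS
  have hSclosed : IsClosed S := by
    refine isClosed_iUnion_of_finite fun i => ?_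
    have := (hgcont i).preimage_isClosed_of_isClosed isClosed_Ici (isClosed_Ici (a := (0:ℝ)))
    convert this using 1
    rfl
  have hg0 : ∀ i, g i 0 < 0 := by
    intro i
    have := h0 i
    simp only [hg, mul_zero]
    linarith
  -- claim: S is empty
  have hSempty : S = ∅ := by
    by_contra hne
    have hne' : S.Nonempty := Set.nonempty_iff_ne_empty.2 hne
    have hbdd : BddBelow S := ⟨0, fun t ht => by
      simp only [hS, Set.mem_iUnion, Set.mem_setOf_eq] at ht
      obtain ⟨i, hi, _⟩ := ht
      exact hi⟩
    set T := sInf S with hT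
    have hTS : T ∈ S := hSclosed.csInf_mem hne' hbdd
    obtain ⟨i, hTi, hgi⟩ : ∃ i, T ∈ Ici (0:ℝ) ∧ 0 ≤ g i T := by
      simpa only [hS, Set.mem_iUnion, Set.mem_setOf_eq] using hTS
    have hTpos : 0 < T := by
      rcases lt_or_eq_of_le (Set.mem_Ici.1 hTi) with h | h
      · exact h
      · exact absurd hgi (by rw [← h]; exact not_le.2 (hg0 i))
    -- before T, all g j are negative
    have hbefore : ∀ t, 0 ≤ t → t < T → ∀ j, g j t < 0 := by
      intro t ht htT j
      by_contra hcon
      push_neg at hcon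
      have : t ∈ S := Set.mem_iUnion.2 ⟨j, ht, hcon⟩
      exact absurd (csInf_le hbdd this) (not_le.2 htT)
    have hneBot : (𝓝[Ioo (0:ℝ) T] T).NeBot := right_nhdsWithin_Ioo_neBot hTpos
    -- at T, all g j ≤ 0
    have hatT : ∀ j, g j T ≤ 0 := by
      intro j
      have htend : Tendsto (g j) (𝓝[Ioo (0:ℝ) T] T) (𝓝 (g j T)) :=
        ((hgcont j T hTi).mono ((fun s hs => hs.1.le))).tendsto
      refine le_of_tendsto htend ?_
      filter_upwards [self_mem_nhdsWithin] with t ht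
      exact le_of_lt (hbefore t ht.1.le ht.2 j)
    -- compare the Hamiltonians at T
    have hHle : H i (fun j => u j.1 T - u i T) ≤ H i (fun j => v j.1 T - v i T) := by
      refine hmono i _ _ fun j => ?_
      have h1 : g j.1 T ≤ 0 := hatT j.1
      have h2 : (0:ℝ) ≤ g i T := hgi
      simp only [hg] at h1 h2
      linarith
    set d : ℝ := (H i (fun j => u j.1 T - u i T) - γ) - (H i (fun j => v j.1 T - v i T) - γ) - ε
      with hd
    have hdneg : d < 0 := by simp only [hd]; linarith
    -- but the left derivative of g i at T is nonnegative
    have hder : HasDerivWithinAt (g i) d (Ioo 0 T) T :=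
      (hgder i T hTi).mono ((fun s hs => hs.1.le))
    have hslope : Tendsto (slope (g i) T) (𝓝[Ioo (0:ℝ) T \ {T}] T) (𝓝 d) :=
      hasDerivWithinAt_iff_tendsto_slope.1 hder
    have hdiff : Ioo (0:ℝ) T \ {T} = Ioo 0 T := by
      ext t; simp only [Set.mem_diff, Set.mem_Ioo, Set.mem_singleton_iff]
      constructor
      · exact fun h => h.1
      · exact fun h => ⟨h, ne_of_lt h.2⟩
    rw [hdiff] at hslope
    have hdnonneg : 0 ≤ d := by
      refine ge_of_tendsto hslope ?_
      filter_upwards [self_mem_nhdsWithin] with t ht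
      have h1 : g i t < 0 := hbefore t ht.1.le ht.2 i
      have h2 : t - T < 0 := by linarith [ht.2]
      have : g i t - g i T < 0 := by linarith
      rw [slope_def_field]
      rw [div_nonneg_iff]
      right
      constructor <;> [skip; linarith]
      show g i t - g i T ≤ 0
      linarith
    linarith
  intro t ht i
  by_contra hcon
  push_neg at hcon
  have : t ∈ S := Set.mem_iUnion.2 ⟨i, ht, by simp only [hg]; linarith⟩
  rw [hSempty] at this
  exact this

/-- Nonexpansiveness of the solution flow in the sup-norm: if `ŷ` and `ẑ`
solve the ergodic-shifted forward equation on `[0,∞)` with initial conditions `x` and `y`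
respectively, then `max_i |ŷ_i(t) − ẑ_i(t)| ≤ max_i |x_i − y_i|` for all `t ≥ 0`
(the norm on `Fin N → ℝ` being the sup-norm). -/
theorem flow_nonexpansive
    (N : ℕ) (V : Fin N → Finset (Fin N)) (hV : ∀ i, i ∉ V i)
    (H : (i : Fin N) → (↥(V i) → ℝ) → ℝ)
    (hmono : ∀ (i : Fin N) (p p' : ↥(V i) → ℝ), (∀ j, p' j ≤ p j) → H i p' ≤ H i p)
    (γ : ℝ) (x y : Fin N → ℝ)
    (yh zh : Fin N → ℝ → ℝ)
    (hyh : ∀ i, ∀ t ∈ Ici (0 : ℝ),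
      HasDerivWithinAt (yh i)
        (H i (fun j => yh j.1 t - yh i t) - γ) (Ici (0 : ℝ)) t)
    (hzh : ∀ i, ∀ t ∈ Ici (0 : ℝ),
      HasDerivWithinAt (zh i)
        (H i (fun j => zh j.1 t - zh i t) - γ) (Ici (0 : ℝ)) t)
    (hyh0 : ∀ i, yh i 0 = x i) (hzh0 : ∀ i, zh i 0 = y i) :
    ∀ t ∈ Ici (0 : ℝ), ‖(fun i => yh i t - zh i t : Fin N → ℝ)‖ ≤ ‖x - y‖ := by
  intro t ht
  set C := ‖x - y‖ with hC
  have hCnn : 0 ≤ C := norm_nonneg _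
  have hbound : ∀ i, |x i - y i| ≤ C := by
    intro i
    have := norm_le_pi_norm (x - y) i
    simpa [Real.norm_eq_abs] using this
  have key : ∀ i, |yh i t - zh i t| ≤ C := by
    intro i
    have h1 : yh i t - zh i t ≤ C := by
      have h0 : ∀ j, yh j 0 - zh j 0 ≤ C := fun j => by
        rw [hyh0 j, hzh0 j]; exact (le_abs_self _).trans (hbound j)
      refine le_of_forall_pos_le_add fun ε hε => ?_
      have hε' : 0 < ε / (1 + t) := div_pos hε (by linarith [ht.out])
      have := flow_key N V H hmono γ yh zh hyh hzh C h0 (ε / (1+t)) hε' t ht i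
      have hne : (1:ℝ) + t ≠ 0 := by linarith [ht.out]
      have : yh i t - zh i t < C + ε := by
        have heq : C + ε / (1 + t) + ε / (1 + t) * t = C + ε := by
          field_simp; ring
        linarith [heq ▸ this]
      linarith
    have h2 : zh i t - yh i t ≤ C := by
      have h0 : ∀ j, zh j 0 - yh j 0 ≤ C := fun j => by
        rw [hyh0 j, hzh0 j]
        have : |y j - x j| ≤ C := by rw [abs_sub_comm]; exact hbound j
        exact (le_abs_self _).trans this
      refine le_of_forall_pos_le_add fun ε hε => ?_
      have hε' : 0 < ε / (1 + t) := div_pos hε (by linarith [ht.out])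
      have := flow_key N V H hmono γ zh yh hzh hyh C h0 (ε / (1+t)) hε' t ht i
      have hne : (1:ℝ) + t ≠ 0 := by linarith [ht.out]
      have : zh i t - yh i t < C + ε := by
        have heq : C + ε / (1 + t) + ε / (1 + t) * t = C + ε := by
          field_simp; ring
        linarith [heq ▸ this]
      linarith
    exact abs_le.2 ⟨by linarith, h1⟩
  rw [pi_norm_le_iff_of_nonneg hCnn]
  intro i
  simpa [Real.norm_eq_abs] using key i
end

section
/- Monotonicity of the maximal deviation from the corrector: let g : I → ℝ, let γ ∈ ℝ and (ξ_i)_{i∈I} solve the ergodic equation −γ + H(i, (ξ_j − ξ_i)_{j∈V(i)}) = 0 for all i ∈ I, and let U = (U_i)_{i∈I} be a continuously differentiable function on [0,∞) satisfying −(d/dt)U_i(t) + H(i, (U_j(t) − U_i(t))_{j∈V(i)}) = 0 with U_i(0) = g(i). Define q(t) = max_{i∈I} (U_i(t) − γ t − ξ_i). Then q is nonincreasing on [0,∞) (i.e. q(t) ≤ q(s) whenever 0 ≤ s ≤ t) and bounded from below (indeed q(t) ≥ min_{j∈I}(g(j) − ξ_j) for all t ≥ 0). -/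
open Set Filter Topology

/-- Auxiliary lemma: the maximum `q(t) = max_i (U_i(t) − γt − ξ_i)` is nonincreasing on
`[0, ∞)`. -/
lemma aux_max_nonincreasing
    (N : ℕ) (V : Fin N → Finset (Fin N))
    (H : (i : Fin N) → (↥(V i) → ℝ) → ℝ)
    (hmono : ∀ (i : Fin N) (p p' : ↥(V i) → ℝ), (∀ j, p' j ≤ p j) → H i p' ≤ H i p)
    (γ : ℝ) (ξ : Fin N → ℝ)
    (hergo : ∀ i, -γ + H i (fun j => ξ j.1 - ξ i) = 0)
    (U : Fin N → ℝ → ℝ)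
    (hU : ∀ i, ∀ t ∈ Ici (0 : ℝ),
      HasDerivWithinAt (U i) (H i (fun j => U j.1 t - U i t)) (Ici (0 : ℝ)) t)
    (q : ℝ → ℝ)
    (hq : ∀ t, IsGreatest (Set.range fun i => U i t - γ * t - ξ i) (q t)) :
    ∀ s t : ℝ, 0 ≤ s → s ≤ t → q t ≤ q s := by
  -- the deviation functions
  set w : Fin N → ℝ → ℝ := fun i t => U i t - γ * t - ξ i with hw
  have hNe : Nonempty (Fin N) := by
    obtain ⟨i, -⟩ := (hq 0).1
    exact ⟨i⟩
  -- derivative of w i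
  have hwd : ∀ i, ∀ x ∈ Ici (0 : ℝ),
      HasDerivWithinAt (w i) (H i (fun j => U j.1 x - U i x) - γ) (Ici (0 : ℝ)) x := by
    intro i x hx
    have h1 : HasDerivWithinAt (fun t : ℝ => γ * t) (γ * 1) (Ici (0:ℝ)) x :=
      (hasDerivWithinAt_id x (Ici (0:ℝ))).const_mul γ
    have := ((hU i x hx).sub h1).sub_const (ξ i)
    simpa [hw, mul_one] using this
  -- q equals a finite sup'
  have hq_eq : ∀ t, q t = Finset.univ.sup' Finset.univ_nonempty (fun i => w i t) := by
    intro t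
    apply le_antisymm
    · obtain ⟨i, hi⟩ := (hq t).1
      rw [← hi]
      exact Finset.le_sup' (fun i => w i t) (Finset.mem_univ i)
    · exact Finset.sup'_le _ _ fun i _ => (hq t).2 ⟨i, rfl⟩
  -- continuity of q on [0, ∞)
  have hqc : ContinuousOn q (Ici (0 : ℝ)) := by
    have : ContinuousOn (fun t => Finset.univ.sup' Finset.univ_nonempty (fun i => w i t))
        (Ici (0 : ℝ)) := by
      apply ContinuousOn.finset_sup'_apply Finset.univ_nonempty
      intro i _
      intro x hx
      exact (hwd i x hx).continuousWithinAt
    exact this.congr fun t _ => hq_eq t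
  intro s t hs hst
  have hIcc : Icc s t ⊆ Ici (0 : ℝ) := fun z hz => hs.trans hz.1
  have key : ∀ ⦃x⦄, x ∈ Icc s t → q x ≤ (fun _ : ℝ => q s) x := by
    apply image_le_of_liminf_slope_right_le_deriv_boundary (B := fun _ => q s)
      (B' := fun _ => (0:ℝ)) (hqc.mono hIcc) le_rfl continuousOn_const
      (fun x _ => hasDerivWithinAt_const x _ (q s))
    intro x hx r hr
    by_contra hcon
    have hcon' : ∀ᶠ z in 𝓝[>] x, r ≤ slope q x z := by
      simpa [not_frequently, not_lt] using hcon
    have hx0 : (0:ℝ) ≤ x := hs.trans hx.1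
    -- pick a frequent maximizer j
    have hjex : ∃ j, ∃ᶠ z in 𝓝[>] x, q z = w j z := by
      by_contra hno
      push_neg at hno
      have h1 : ∀ᶠ z in 𝓝[>] x, ∀ j, q z ≠ w j z := by
        rw [eventually_all]
        intro j
        simpa [not_frequently] using hno j
      obtain ⟨z, hz⟩ := h1.exists
      obtain ⟨j, hj⟩ := (hq z).1
      exact hz j hj.symm
    obtain ⟨j, hj⟩ := hjex
    have hfreq : ∃ᶠ z in 𝓝[>] x, q z = w j z ∧ r ≤ slope q x z ∧ z ∈ Ioi x :=
      hj.and_eventually (hcon'.and self_mem_nhdsWithin)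
    -- continuity of w j within from the right
    have hwc : Tendsto (w j) (𝓝[>] x) (𝓝 (w j x)) := by
      have h1 : ContinuousWithinAt (w j) (Ici (0:ℝ)) x := (hwd j x hx0).continuousWithinAt
      exact h1.mono_left (nhdsWithin_mono x fun z hz => le_of_lt (lt_of_le_of_lt hx0 hz))
    -- j is a maximizer at x
    have hmax : w j x = q x := by
      refine le_antisymm ((hq x).2 ⟨j, rfl⟩) ?_
      by_contra hlt
      push_neg at hlt
      have hev : ∀ᶠ z in 𝓝[>] x, w j z < q x :=
        hwc (IsOpen.mem_nhds isOpen_Iio hlt)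
      obtain ⟨z, ⟨hz1, hz2, hz3⟩, hz4⟩ := (hfreq.and_eventually hev).exists
      have hzx : 0 < z - x := sub_pos.2 hz3
      have : r ≤ (q z - q x) / (z - x) := by simpa [slope_def_field] using hz2
      have h5 : r * (z - x) ≤ q z - q x := (le_div_iff₀ hzx).1 this
      nlinarith
    -- the right derivative of w j at x is nonpositive
    set d : ℝ := H j (fun k => U k.1 x - U j x) - γ with hd
    have hdle : d ≤ 0 := by
      have h1 : H j (fun k => U k.1 x - U j x) ≤ H j (fun k => ξ k.1 - ξ j) := by
        apply hmono
        intro k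
        have hk : w k.1 x ≤ q x := (hq x).2 ⟨k.1, rfl⟩
        have : w k.1 x ≤ w j x := hmax ▸ hk
        simp only [hw] at this
        linarith
      have h2 : H j (fun k => ξ k.1 - ξ j) = γ := by linarith [hergo j]
      simp only [hd]
      linarith
    -- slope of w j tends to d from the right
    have hder : HasDerivWithinAt (w j) d (Ici x) x :=
      (hwd j x hx0).mono (Ici_subset_Ici.2 hx0)
    have hslope : Tendsto (slope (w j) x) (𝓝[>] x) (𝓝 d) :=
      (hasDerivWithinAt_iff_tendsto_slope' (lt_irrefl x)).1 hder.Ioi_of_Ici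
    -- but the slope of w j is frequently ≥ r > 0 ≥ d, contradiction
    have hev2 : ∀ᶠ z in 𝓝[>] x, slope (w j) x z < r :=
      hslope (IsOpen.mem_nhds isOpen_Iio (lt_of_le_of_lt hdle hr))
    obtain ⟨z, ⟨hz1, hz2, hz3⟩, hz4⟩ := (hfreq.and_eventually hev2).exists
    have : slope q x z = slope (w j) x z := by
      simp [slope_def_field, hz1, hmax]
    linarith [hz2, this ▸ hz2]
  simpa using key (right_mem_Icc.2 hst)

/-- Monotonicity of the maximal deviation from the corrector: with
`q(t) = max_i (U_i(t) − γt − ξ_i)`, the function `q` is nonincreasing on `[0,∞)` and bounded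
from below by `min_j (g(j) − ξ_j)`. -/
theorem maximal_deviation_nonincreasing
    (N : ℕ) (V : Fin N → Finset (Fin N)) (hV : ∀ i, i ∉ V i)
    (H : (i : Fin N) → (↥(V i) → ℝ) → ℝ)
    (hmono : ∀ (i : Fin N) (p p' : ↥(V i) → ℝ), (∀ j, p' j ≤ p j) → H i p' ≤ H i p)
    (g : Fin N → ℝ) (γ : ℝ) (ξ : Fin N → ℝ)
    (hergo : ∀ i, -γ + H i (fun j => ξ j.1 - ξ i) = 0)
    (U : Fin N → ℝ → ℝ)
    (hU : ∀ i, ∀ t ∈ Ici (0 : ℝ),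
      HasDerivWithinAt (U i) (H i (fun j => U j.1 t - U i t)) (Ici (0 : ℝ)) t)
    (hU0 : ∀ i, U i 0 = g i)
    (q : ℝ → ℝ)
    (hq : ∀ t, IsGreatest (Set.range fun i => U i t - γ * t - ξ i) (q t))
    (C₁ : ℝ) (hC₁ : IsLeast (Set.range fun j => g j - ξ j) C₁) :
    (∀ s t : ℝ, 0 ≤ s → s ≤ t → q t ≤ q s) ∧ (∀ t ∈ Ici (0 : ℝ), C₁ ≤ q t) := by
  have hNe : Nonempty (Fin N) := by
    obtain ⟨i, -⟩ := (hq 0).1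
    exact ⟨i⟩
  constructor
  · exact aux_max_nonincreasing N V H hmono γ ξ hergo U hU q hq
  · -- apply the auxiliary lemma to the negated system
    set H' : (i : Fin N) → (↥(V i) → ℝ) → ℝ := fun i p => -H i (fun k => -(p k)) with hH'
    set U' : Fin N → ℝ → ℝ := fun i t => -(U i t) with hU'
    set ξ' : Fin N → ℝ := fun i => -(ξ i) with hξ'
    set m : ℝ → ℝ := fun t => Finset.univ.inf' Finset.univ_nonempty
      (fun i => U i t - γ * t - ξ i) with hm
    set q' : ℝ → ℝ := fun t => -(m t) with hq'def
    have hmono' : ∀ (i : Fin N) (p p' : ↥(V i) → ℝ), (∀ j, p' j ≤ p j) → H' i p' ≤ H' i p := by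
      intro i p p' hpp
      simp only [hH', neg_le_neg_iff]
      exact hmono i _ _ fun j => neg_le_neg (hpp j)
    have hergo' : ∀ i, -(-γ) + H' i (fun j => ξ' j.1 - ξ' i) = 0 := by
      intro i
      have h1 : (fun j : ↥(V i) => -(ξ' j.1 - ξ' i)) = fun j => ξ j.1 - ξ i := by
        funext j; simp [hξ']; ring
      simp only [hH', h1]
      linarith [hergo i]
    have hUd' : ∀ i, ∀ t ∈ Ici (0 : ℝ),
        HasDerivWithinAt (U' i) (H' i (fun j => U' j.1 t - U' i t)) (Ici (0 : ℝ)) t := by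
      intro i t ht
      have h1 : (fun j : ↥(V i) => -(U' j.1 t - U' i t)) = fun j => U j.1 t - U i t := by
        funext j; simp [hU']; ring
      simp only [hH', h1]
      exact (hU i t ht).neg
    have hq'g : ∀ t, IsGreatest (Set.range fun i => U' i t - (-γ) * t - ξ' i) (q' t) := by
      intro t
      have hrange : (fun i : Fin N => U' i t - (-γ) * t - ξ' i)
          = fun i => -(U i t - γ * t - ξ i) := by
        funext i; simp [hU', hξ']; ring
      constructor
      · obtain ⟨i, hi, hieq⟩ := Finset.exists_mem_eq_inf' (Finset.univ_nonempty (α := Fin N))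
          (fun i => U i t - γ * t - ξ i)
        refine ⟨i, ?_⟩
        rw [hrange]
        simp [hq'def, hm, hieq]
      · rintro y ⟨i, rfl⟩
        rw [hrange]
        simp only [hq'def, hm, neg_le_neg_iff]
        exact Finset.inf'_le _ (Finset.mem_univ i)
    have hmono_m : ∀ t : ℝ, 0 ≤ t → m 0 ≤ m t := by
      intro t ht
      have := aux_max_nonincreasing N V H' hmono' (-γ) ξ' hergo' U' hUd' q' hq'g 0 t le_rfl ht
      simpa [hq'def] using this
    intro t ht
    have hC₁m : C₁ ≤ m 0 := by
      apply Finset.le_inf'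
      intro i _
      have := hC₁.2 ⟨i, rfl⟩
      simpa [hU0 i] using this
    obtain ⟨i, hi⟩ := (hq t).1
    have h1 : m t ≤ U i t - γ * t - ξ i := Finset.inf'_le _ (Finset.mem_univ i)
    have h2 := hmono_m t ht
    have hi' : U i t - γ * t - ξ i = q t := hi
    linarith
end

section
/- Long-term behavior of the de-drifted value function: let g : I → ℝ, let γ ∈ ℝ and (ξ_i)_{i∈I} solve the ergodic equation −γ + H(i, (ξ_j − ξ_i)_{j∈V(i)}) = 0 for all i ∈ I, and let U = (U_i)_{i∈I} be a continuously differentiable function on [0,∞) satisfying −(d/dt)U_i(t) + H(i, (U_j(t) − U_i(t))_{j∈V(i)}) = 0 for all (i,t) ∈ I × [0,∞) with U_i(0) = g(i). Define q(t) = max_{i∈I} (U_i(t) − γ t − ξ_i) and q_∞ = inf_{t ≥ 0} q(t). Then for every i ∈ I: lim_{t→∞} (U_i(t) − γ t) = ξ_i + q_∞. -/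
open Set Filter Topology

private lemma aux_le_of_forall_pos {x y w : ℝ} (hw : 0 ≤ w)
    (h : ∀ c : ℝ, 0 < c → x ≤ y + c * w) : x ≤ y := by
  by_contra h'
  push_neg at h'
  have hc : (0:ℝ) < (x - y) / (2 * (w + 1)) := by
    apply div_pos (by linarith) (by linarith)
  have h1 := h _ hc
  rw [div_mul_eq_mul_div] at h1
  have h2 : (x - y) * w / (2 * (w + 1)) < x - y := by
    rw [div_lt_iff₀ (by linarith)]
    nlinarith
  linarith

private lemma barrier {ι : Type*} [Fintype ι] (f d : ι → ℝ → ℝ) (a b B₀ c : ℝ)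
    (ha : 0 ≤ a)
    (hd : ∀ i, ∀ t ∈ Icc a b, HasDerivWithinAt (f i) (d i t) (Ici 0) t)
    (h0 : ∀ i, f i a ≤ B₀)
    (hkey : ∀ t ∈ Icc a b, ∀ i, f i t = B₀ + c * (t - a) →
      (∀ j, f j t ≤ B₀ + c * (t - a)) → d i t < c) :
    ∀ t ∈ Icc a b, ∀ i, f i t ≤ B₀ + c * (t - a) := by
  set B : ℝ → ℝ := fun t => B₀ + c * (t - a) with hB
  by_contra hbad
  push_neg at hbad
  obtain ⟨t₁, ht₁, i₁, hi₁⟩ := hbad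
  set bad : Set ℝ := {t | t ∈ Icc a b ∧ ∃ i, B t < f i t} with hbaddef
  have hbadne : bad.Nonempty := ⟨t₁, ht₁, i₁, hi₁⟩
  have hbadbdd : BddBelow bad := ⟨a, fun t ht => ht.1.1⟩
  set T : ℝ := sInf bad with hT
  have hTa : a ≤ T := le_csInf hbadne (fun t ht => ht.1.1)
  have hTb : T ≤ b := le_trans (csInf_le hbadbdd hbadne.choose_spec) hbadne.choose_spec.1.2
  have hTmem : T ∈ Icc a b := ⟨hTa, hTb⟩
  have hgood : ∀ t, a ≤ t → t < T → ∀ i, f i t ≤ B t := by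
    intro t hat htT i
    by_contra hc'
    push_neg at hc'
    exact absurd (csInf_le hbadbdd ⟨⟨hat, le_trans htT.le hTb⟩, i, hc'⟩) (not_le.mpr htT)
  have hFT : ∀ i, f i T ≤ B T := by
    intro i
    rcases eq_or_lt_of_le hTa with h | h
    · simpa [hB, ← h] using h0 i
    · by_contra hc'
      push_neg at hc'
      have hT0 : (0:ℝ) < T := lt_of_le_of_lt ha h
      have hcontf : ContinuousAt (f i) T :=
        ((hd i T hTmem).continuousWithinAt).continuousAt (Ici_mem_nhds hT0)
      have hcontB : ContinuousAt B T := by fun_prop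
      have hev : ∀ᶠ t in 𝓝 T, B t < f i t := hcontB.eventually_lt hcontf hc'
      obtain ⟨ε, hε, hball⟩ := Metric.eventually_nhds_iff.mp hev
      set t' : ℝ := max a (T - ε / 2) with ht'
      have h1 : t' < T := max_lt h (by linarith)
      have h2 : a ≤ t' := le_max_left _ _
      have h3 : dist t' T < ε := by
        rw [Real.dist_eq, abs_lt]
        have : T - ε/2 ≤ t' := le_max_right _ _
        constructor <;> [linarith; linarith]
      exact absurd (hgood t' h2 h1 i) (not_le.mpr (hball h3))
  have hTnotbad : T ∉ bad := by
    rintro ⟨-, i, hi⟩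
    exact absurd (hFT i) (not_le.mpr hi)
  have hbadIoi : bad ⊆ Ioi T := by
    intro t ht
    rcases lt_trichotomy t T with h | h | h
    · exact absurd (csInf_le hbadbdd ht) (not_le.mpr h)
    · exact absurd (h ▸ ht) hTnotbad
    · exact h
  have hTcl : T ∈ closure bad := csInf_mem_closure hbadne hbadbdd
  have hpigeon : ∃ i, T ∈ closure {t | t ∈ bad ∧ B t < f i t} := by
    by_contra hc'
    push_neg at hc'
    have hUs : ∀ i, ∃ U ∈ 𝓝 T, U ∩ {t | t ∈ bad ∧ B t < f i t} = ∅ := by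
      intro i
      have := hc' i
      rw [mem_closure_iff] at this
      push_neg at this
      obtain ⟨U, hU1, hU2, hU3⟩ := this
      exact ⟨U, hU1.mem_nhds hU2, hU3⟩
    choose Uf hUf hUf2 using hUs
    have hUmem : (⋂ i, Uf i) ∈ 𝓝 T := Filter.iInter_mem.mpr hUf
    rw [mem_closure_iff] at hTcl
    obtain ⟨y, hy1, hy2⟩ := hTcl (interior (⋂ i, Uf i)) isOpen_interior
      (mem_interior_iff_mem_nhds.mpr hUmem)
    obtain ⟨i, hi⟩ := hy2.2
    have hyU : y ∈ Uf i := Set.mem_iInter.mp (interior_subset hy1) i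
    have : y ∈ Uf i ∩ {t | t ∈ bad ∧ B t < f i t} := ⟨hyU, hy2, hi⟩
    rw [hUf2 i] at this
    exact this
  obtain ⟨i, hicl⟩ := hpigeon
  set badi : Set ℝ := {t | t ∈ bad ∧ B t < f i t} with hbadi
  have hbadiT : badi ⊆ Ioi T := fun t ht => hbadIoi ht.1
  have hne : (𝓝[badi] T).NeBot := mem_closure_iff_nhdsWithin_neBot.mp hicl
  have hfiT : f i T = B T := by
    refine le_antisymm (hFT i) ?_
    have hcont : ContinuousWithinAt (f i) badi T :=
      ((hd i T hTmem).continuousWithinAt).mono (fun t ht => le_trans ha (ht.1.1.1))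
    have hcontB : ContinuousWithinAt B badi T := Continuous.continuousWithinAt (by fun_prop)
    have htend : Tendsto (fun t => f i t - B t) (𝓝[badi] T) (𝓝 (f i T - B T)) :=
      hcont.sub hcontB
    have hge : (0:ℝ) ≤ f i T - B T :=
      ge_of_tendsto htend (eventually_nhdsWithin_of_forall
        (fun t ht => le_of_lt (sub_pos.mpr ht.2)))
    linarith
  have hdlt : d i T < c := hkey T hTmem i hfiT (fun j => hFT j)
  have hslope : Tendsto (slope (f i) T) (𝓝[Ici 0 \ {T}] T) (𝓝 (d i T)) :=
    hasDerivWithinAt_iff_tendsto_slope.mp (hd i T hTmem)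
  have hsub : badi ⊆ Ici 0 \ {T} := fun t ht =>
    ⟨le_trans ha ht.1.1.1, ne_of_gt (hbadiT ht)⟩
  have hslope2 : Tendsto (slope (f i) T) (𝓝[badi] T) (𝓝 (d i T)) :=
    hslope.mono_left (nhdsWithin_mono _ hsub)
  have hge : c ≤ d i T := by
    refine ge_of_tendsto hslope2 (eventually_nhdsWithin_of_forall (fun t ht => ?_))
    have hTt : T < t := hbadiT ht
    have h1 : B t < f i t := ht.2
    rw [slope_def_field, le_div_iff₀ (by linarith : (0:ℝ) < t - T)]
    have hBt : B t = B₀ + c * (t - a) := rfl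
    have hBT : B T = B₀ + c * (T - a) := rfl
    nlinarith [hfiT]
  linarith

private lemma growth (f d : ℝ → ℝ) (a b K : ℝ) (ha : 0 ≤ a)
    (hd : ∀ t ∈ Icc a b, HasDerivWithinAt f (d t) (Ici 0) t)
    (hbound : ∀ t ∈ Icc a b, d t ≤ K) :
    ∀ t ∈ Icc a b, f t ≤ f a + K * (t - a) := by
  intro t ht
  have key : ∀ c : ℝ, 0 < c → f t ≤ (f a + K * (t - a)) + c * (t - a) := by
    intro c hc
    have := barrier (fun _ : Unit => f) (fun _ => d) a b (f a) (K + c) ha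
      (fun _ => hd) (fun _ => le_refl _)
      (fun s hs _ _ _ => lt_of_le_of_lt (hbound s hs) (by linarith)) t ht ()
    linarith
  exact aux_le_of_forall_pos (by linarith [ht.1]) key

private lemma stay_below (f d : ℝ → ℝ) (a b L : ℝ) (ha : 0 ≤ a)
    (hd : ∀ t ∈ Icc a b, HasDerivWithinAt f (d t) (Ici 0) t)
    (hL : f a ≤ L)
    (hkey : ∀ t ∈ Icc a b, L ≤ f t → d t < 0) :
    ∀ t ∈ Icc a b, f t ≤ L := by
  intro t ht
  have key : ∀ c : ℝ, 0 < c → f t ≤ L + c * (t - a) := by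
    intro c hc
    have := barrier (fun _ : Unit => f) (fun _ => d) a b L c ha
      (fun _ => hd) (fun _ => hL)
      (fun s hs _ heq _ => lt_of_lt_of_le (hkey s hs (by nlinarith [hs.1])) hc.le) t ht ()
    linarith
  exact aux_le_of_forall_pos (by linarith [ht.1]) key

set_option maxHeartbeats 1000000 in
theorem de_drifted_value_convergence
    (N : ℕ) (V : Fin N → Finset (Fin N)) (hV : ∀ i, i ∉ V i)
    (hconn : ∀ i j : Fin N, Relation.ReflTransGen (fun a b => b ∈ V a) i j)
    (H : (i : Fin N) → (↥(V i) → ℝ) → ℝ)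
    (hlip : ∀ i, LocallyLipschitz (H i))
    (hstrict : ∀ (i : Fin N) (p p' : ↥(V i) → ℝ),
      (∀ j, p' j ≤ p j) → (∃ k, p' k < p k) → H i p' < H i p)
    (g : Fin N → ℝ) (γ : ℝ) (ξ : Fin N → ℝ)
    (hergo : ∀ i, -γ + H i (fun j => ξ j.1 - ξ i) = 0)
    (U : Fin N → ℝ → ℝ)
    (hU : ∀ i, ∀ t ∈ Ici (0 : ℝ),
      HasDerivWithinAt (U i) (H i (fun j => U j.1 t - U i t)) (Ici (0 : ℝ)) t)
    (hU0 : ∀ i, U i 0 = g i)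
    (q : ℝ → ℝ)
    (hq : ∀ t, IsGreatest (Set.range fun i => U i t - γ * t - ξ i) (q t))
    (qinf : ℝ) (hqinf : IsGLB (q '' Ici (0 : ℝ)) qinf) :
    ∀ i, Tendsto (fun t => U i t - γ * t) atTop (𝓝 (ξ i + qinf)) := by
  rcases Nat.eq_zero_or_pos N with hN0 | hN
  · subst hN0; exact fun i => i.elim0
  haveI : Nonempty (Fin N) := ⟨⟨0, hN⟩⟩
  -- de-drifted functions
  set W : Fin N → ℝ → ℝ := fun i t => U i t - γ * t - ξ i with hW
  set D : Fin N → ℝ → ℝ := fun i t => H i (fun j => U j.1 t - U i t) - γ with hD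
  have hγ : ∀ i, γ = H i (fun j : ↥(V i) => ξ j.1 - ξ i) := by
    intro i; have := hergo i; linarith
  have hWd : ∀ i, ∀ t ∈ Ici (0:ℝ), HasDerivWithinAt (W i) (D i t) (Ici 0) t := by
    intro i t ht
    have h1 : HasDerivWithinAt (fun s : ℝ => γ * s + ξ i) γ (Ici 0) t := by
      simpa using ((hasDerivWithinAt_id t (Ici (0:ℝ))).const_mul γ).add_const (ξ i)
    have h2 : HasDerivWithinAt (fun s => U i s - (γ * s + ξ i)) (D i t) (Ici 0) t :=
      (hU i t ht).sub h1
    have h3 : W i = fun s => U i s - (γ * s + ξ i) := by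
      funext s
      show U i s - γ * s - ξ i = U i s - (γ * s + ξ i)
      ring
    rw [h3]
    exact h2
  have hWdiff : ∀ (i : Fin N) (j : Fin N) (t : ℝ),
      U j t - U i t = (W j t - W i t) + (ξ j - ξ i) := by
    intro i j t; simp [hW]; ring
  -- monotonicity of H
  have Hmono : ∀ (i : Fin N) (p p' : ↥(V i) → ℝ), (∀ j, p' j ≤ p j) → H i p' ≤ H i p := by
    intro i p p' hle
    by_cases heq : p' = p
    · exact le_of_eq (by rw [heq])
    · refine le_of_lt (hstrict i p p' hle ?_)
      by_contra hc
      push_neg at hc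
      exact heq (funext fun k => le_antisymm (hle k) (hc k))
  -- q facts
  have hqub : ∀ t i, W i t ≤ q t := fun t i => (hq t).2 ⟨i, rfl⟩
  have hqex : ∀ t, ∃ i, W i t = q t := by
    intro t
    obtain ⟨i, hi⟩ := (hq t).1
    exact ⟨i, hi⟩
  -- derivative signs at argmax/argmin
  have Dmax : ∀ (i : Fin N) (t : ℝ), (∀ j, W j t ≤ W i t) → D i t ≤ 0 := by
    intro i t hmax
    have : H i (fun j => U j.1 t - U i t) ≤ H i (fun j : ↥(V i) => ξ j.1 - ξ i) := by
      apply Hmono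
      intro j
      rw [hWdiff i j.1 t]
      have := hmax j.1
      linarith
    rw [hD]
    simp only
    rw [hγ i] at *
    linarith
  have Dmin : ∀ (i : Fin N) (t : ℝ), (∀ j, W i t ≤ W j t) → 0 ≤ D i t := by
    intro i t hmin
    have : H i (fun j : ↥(V i) => ξ j.1 - ξ i) ≤ H i (fun j => U j.1 t - U i t) := by
      apply Hmono
      intro j
      rw [hWdiff i j.1 t]
      have := hmin j.1
      linarith
    rw [hD]
    simp only
    rw [hγ i] at *
    linarith
  -- q is nonincreasing on [0,∞)
  have qanti : ∀ s t : ℝ, 0 ≤ s → s ≤ t → q t ≤ q s := by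
    intro s t hs hst
    obtain ⟨i₀, hi₀⟩ := hqex t
    have key : ∀ c : ℝ, 0 < c → q t ≤ q s + c * (t - s) := by
      intro c hc
      have := barrier W D s t (q s) c hs
        (fun i u hu => hWd i u (le_trans hs hu.1))
        (fun i => hqub s i)
        (fun u hu i heq hall => by
          refine lt_of_le_of_lt (Dmax i u (fun j => ?_)) hc
          rw [heq]; exact hall j)
        t ⟨hst, le_refl t⟩ i₀
      linarith [hi₀]
    exact aux_le_of_forall_pos (by linarith) key
  -- the min function
  set m : ℝ → ℝ := fun t => Finset.univ.inf' Finset.univ_nonempty (fun i => W i t) with hm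
  have hmlb : ∀ t i, m t ≤ W i t := fun t i =>
    Finset.inf'_le _ (Finset.mem_univ i)
  have hmex : ∀ t, ∃ i, m t = W i t := by
    intro t
    obtain ⟨i, _, hi⟩ := Finset.exists_mem_eq_inf' Finset.univ_nonempty (fun i => W i t)
    exact ⟨i, hi⟩
  have mmono : ∀ s t : ℝ, 0 ≤ s → s ≤ t → m s ≤ m t := by
    intro s t hs hst
    obtain ⟨i₀, hi₀⟩ := hmex t
    have key : ∀ c : ℝ, 0 < c → -(m t) ≤ -(m s) + c * (t - s) := by
      intro c hc
      have := barrier (fun i u => -(W i u)) (fun i u => -(D i u)) s t (-(m s)) c hs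
        (fun i u hu => (hWd i u (le_trans hs hu.1)).neg)
        (fun i => neg_le_neg (hmlb s i))
        (fun u hu i heq hall => by
          refine lt_of_le_of_lt (neg_nonpos.mpr (Dmin i u (fun j => ?_))) hc
          have h1 : -(W j u) ≤ -(m s) + c * (u - s) := hall j
          have h2 : -(W i u) = -(m s) + c * (u - s) := heq
          linarith)
        t ⟨hst, le_refl t⟩ i₀
      linarith [hi₀]
    have := aux_le_of_forall_pos (by linarith) key
    linarith
  -- global bounds
  have hWub : ∀ (i : Fin N) (t : ℝ), 0 ≤ t → W i t ≤ q 0 := fun i t ht =>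
    le_trans (hqub t i) (qanti 0 t le_rfl ht)
  have hWlb : ∀ (i : Fin N) (t : ℝ), 0 ≤ t → m 0 ≤ W i t := fun i t ht =>
    le_trans (mmono 0 t le_rfl ht) (hmlb t i)
  have hm0q0 : m 0 ≤ q 0 := le_trans (hmlb 0 (Classical.arbitrary _)) (hqub 0 _)
  -- qinf facts
  have hqinf_le : ∀ t : ℝ, 0 ≤ t → qinf ≤ q t := fun t ht =>
    hqinf.1 ⟨t, ht, rfl⟩
  have hqtend : ∀ σ : ℝ, 0 < σ → ∃ T : ℝ, 0 ≤ T ∧ ∀ t, T ≤ t → q t ≤ qinf + σ := by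
    intro σ hσ
    by_contra hc
    push_neg at hc
    have hlb : qinf + σ ∈ lowerBounds (q '' Ici (0:ℝ)) := by
      rintro y ⟨t, ht, rfl⟩
      obtain ⟨t', htt', ht'⟩ := hc t ht
      exact le_trans ht'.le (qanti t t' ht htt')
    linarith [hqinf.2 hlb]
  -- the limit of the min
  set minf : ℝ := sSup (m '' Ici 0) with hminf
  have hmbdd : BddAbove (m '' Ici (0:ℝ)) := by
    refine ⟨q 0, ?_⟩
    rintro y ⟨t, ht, rfl⟩
    exact le_trans (hmlb t (Classical.arbitrary _)) (hWub _ t ht)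
  have hmne : (m '' Ici (0:ℝ)).Nonempty := ⟨m 0, 0, Set.self_mem_Ici, rfl⟩
  have hm_le : ∀ t : ℝ, 0 ≤ t → m t ≤ minf := fun t ht =>
    le_csSup hmbdd ⟨t, ht, rfl⟩
  clear_value W D m minf
  -- THE KEY CLAIM
  have KEY : ¬ (minf < qinf) := by
    intro hlt
    -- big constant and boxes
    set B : ℝ := (q 0 - m 0) + 2 with hBdef
    have hB2 : 2 ≤ B := by have := hm0q0; simp only [hBdef]; linarith
    have hB0 : 0 < B := by linarith
    clear_value B
    set S : (i : Fin N) → Set (↥(V i) → ℝ) :=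
      fun i => Set.univ.pi (fun j => Icc (ξ j.1 - ξ i - B) (ξ j.1 - ξ i + B)) with hSdef
    have hScomp : ∀ i, IsCompact (S i) := fun i => isCompact_univ_pi (fun j => isCompact_Icc)
    have hWdiffbound : ∀ (a b : Fin N) (t : ℝ), 0 ≤ t → |W a t - W b t| ≤ B := by
      intro a b t ht
      rw [abs_le]
      have h1 := hWub a t ht
      have h2 := hWlb a t ht
      have h3 := hWub b t ht
      have h4 := hWlb b t ht
      constructor
      · simp only [hBdef]; linarith
      · simp only [hBdef]; linarith
    have hpmem : ∀ (i : Fin N) (t : ℝ), 0 ≤ t →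
        (fun j : ↥(V i) => U j.1 t - U i t) ∈ S i := by
      intro i t ht
      intro j _
      show U j.1 t - U i t ∈ Icc (ξ j.1 - ξ i - B) (ξ j.1 - ξ i + B)
      have hd := hWdiffbound j.1 i t ht
      rw [abs_le] at hd
      rw [mem_Icc, hWdiff i j.1 t]
      constructor
      · linarith [hd.1]
      · linarith [hd.2]
    have hξmem : ∀ i : Fin N, (fun j : ↥(V i) => ξ j.1 - ξ i) ∈ S i := by
      intro i j _
      show (ξ j.1 - ξ i) ∈ Icc (ξ j.1 - ξ i - B) (ξ j.1 - ξ i + B)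
      rw [mem_Icc]
      constructor
      · linarith
      · linarith
    -- uniform derivative upper bound
    have hCex : ∀ i : Fin N, ∃ Ci : ℝ, ∀ p ∈ S i, H i p ≤ Ci := by
      intro i
      obtain ⟨p0, _, hmax⟩ := (hScomp i).exists_isMaxOn ⟨_, hξmem i⟩
        ((hlip i).continuous.continuousOn)
      exact ⟨H i p0, fun p hp => hmax hp⟩
    choose Cf hCf using hCex
    set C : ℝ := 1 + Finset.univ.sup' Finset.univ_nonempty (fun i => Cf i - γ) with hCdef
    have hsup0 : ∀ i : Fin N, (0:ℝ) ≤ Cf i - γ := by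
      intro i
      have h1 := hCf i _ (hξmem i)
      have h2 := hγ i
      linarith
    have hC1 : 1 ≤ C := by
      have := le_trans (hsup0 (Classical.arbitrary _))
        (Finset.le_sup' (fun i => Cf i - γ) (Finset.mem_univ (Classical.arbitrary _)))
      simp only [hCdef]; linarith
    have hC0 : 0 < C := by linarith
    have hCb : ∀ (i : Fin N) (t : ℝ), 0 ≤ t → D i t ≤ C := by
      intro i t ht
      have h1 : H i (fun j => U j.1 t - U i t) ≤ Cf i := hCf i _ (hpmem i t ht)
      have h2 : Cf i - γ ≤ Finset.univ.sup' Finset.univ_nonempty (fun i => Cf i - γ) :=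
        Finset.le_sup' (fun i => Cf i - γ) (Finset.mem_univ i)
      simp only [hD, hCdef]
      linarith
    clear_value C
    -- basic small constants
    set ε₀ : ℝ := min ((qinf - minf)/2) 1 with hε₀def
    have hε₀ : 0 < ε₀ := lt_min (by linarith) one_pos
    have hε₀1 : ε₀ ≤ 1 := min_le_right _ _
    have hm2ε : minf ≤ qinf - 2*ε₀ := by
      have h := min_le_left ((qinf - minf)/2) 1
      rw [hε₀def]
      linarith
    clear_value ε₀
    set ρ : ℝ := ε₀ / C with hρdef
    have hρ : 0 < ρ := div_pos hε₀ hC0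
    have hρ : 0 < ρ := div_pos hε₀ hC0
    have hCρ : C * ρ = ε₀ := by
      rw [hρdef]
      field_simp
    clear_value ρ
    set ρ' : ℝ := ρ / (2*N) with hρ'def
    have hN' : (0:ℝ) < N := by exact_mod_cast hN
    have hρ'pos : 0 < ρ' := by
      rw [hρ'def]
      exact div_pos hρ (by positivity)
    clear_value ρ'
    have hNρ'eq : (N:ℝ) * ρ' = ρ/2 := by
      rw [hρ'def]
      field_simp
    have hNρ' : (N:ℝ) * ρ' ≤ ρ := by rw [hNρ'eq]; linarith
    -- ONE-STEP PROPAGATION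
    have prop1 : ∀ ε : ℝ, 0 < ε → ε ≤ 1 →
        ∃ η, 0 < η ∧ η ≤ ε/2 ∧ ∃ σ₀, 0 < σ₀ ∧ ∀ σ, 0 < σ → σ ≤ σ₀ →
        ∀ (i : Fin N) (k : ↥(V i)), ∀ a b : ℝ, 0 ≤ a →
        (∀ t ∈ Icc a b, W k.1 t ≤ qinf - ε) →
        (∀ t ∈ Icc a b, ∀ j, W j t ≤ qinf + σ) →
        ∀ t ∈ Icc (a + ρ') b, W i t ≤ qinf - η := by
      intro ε hε hε1
      have pair : ∀ (i : Fin N) (k : ↥(V i)), ∃ δ : ℝ, 0 < δ ∧ ∃ θ : ℝ, 0 < θ ∧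
          ∀ t : ℝ, 0 ≤ t → ∀ η σ : ℝ, 0 < η → η ≤ ε/2 → 0 < σ → σ + η ≤ θ →
          W k.1 t ≤ qinf - ε → (∀ j, W j t ≤ qinf + σ) → qinf - η ≤ W i t →
          D i t ≤ -(δ/2) := by
        intro i k
        classical
        set ξd : ↥(V i) → ℝ := fun j => ξ j.1 - ξ i with hξd
        have hγi : γ = H i ξd := hγ i
        have hξdj : ∀ j : ↥(V i), ξd j = ξ j.1 - ξ i := fun j => by rw [hξd]
        clear_value ξd
        set u : ↥(V i) → ℝ := fun j => if j = k then ξd j - ε/2 else ξd j with hu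
        have huk : u k = ξd k - ε/2 := by rw [hu]; simp
        have hune : ∀ j, j ≠ k → u j = ξd j := by
          intro j h
          rw [hu]
          simp [h]
        clear_value u
        have hul : ∀ j, ξd j - B ≤ u j := by
          intro j
          by_cases h : j = k
          · subst h
            rw [huk]
            linarith
          · rw [hune j h]
            linarith
        have huu : ∀ j, u j ≤ ξd j := by
          intro j
          by_cases h : j = k
          · subst h
            rw [huk]
            linarith
          · rw [hune j h]
        set G : Set (↥(V i) → ℝ) := Set.univ.pi (fun j => Icc (ξd j - B) (u j)) with hG
        have hGcomp : IsCompact G := isCompact_univ_pi (fun j => isCompact_Icc)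
        have hGne : G.Nonempty := ⟨u, fun j _ => ⟨hul j, le_refl _⟩⟩
        obtain ⟨pstar, hpstarG, hpmax⟩ :=
          hGcomp.exists_isMaxOn hGne ((hlip i).continuous.continuousOn)
        have hpstarmem : ∀ j : ↥(V i), pstar j ∈ Icc (ξd j - B) (u j) :=
          fun j => hpstarG j (Set.mem_univ j)
        have hpstar_le : ∀ j, pstar j ≤ ξd j := fun j =>
          le_trans (hpstarmem j).2 (huu j)
        have hpstar_k : pstar k < ξd k := by
          have h1 := (hpstarmem k).2
          rw [huk] at h1
          linarith
        set δ : ℝ := H i ξd - H i pstar with hδdef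
        have hδ : 0 < δ := sub_pos.mpr (hstrict i ξd pstar hpstar_le ⟨k, hpstar_k⟩)
        clear_value δ
        have hUC := (hScomp i).uniformContinuousOn_of_continuous
          ((hlip i).continuous.continuousOn)
        rw [Metric.uniformContinuousOn_iff] at hUC
        obtain ⟨θ, hθ, hUCθ⟩ := hUC (δ/2) (half_pos hδ)
        refine ⟨δ, hδ, θ/2, half_pos hθ, ?_⟩
        intro t ht η σ hη hηε hσ hσθ hWk hWj hWi
        simp only [hD]
        set p : ↥(V i) → ℝ := fun j => U j.1 t - U i t with hp
        have hpS : p ∈ S i := hpmem i t ht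
        have hpbox : ∀ j : ↥(V i), p j ∈ Icc (ξd j - B) (ξd j + B) := by
          intro j
          have := hpS j (Set.mem_univ j)
          rw [hξdj j]
          exact this
        have hpj : ∀ j : ↥(V i), p j = ξd j + (W j.1 t - W i t) := by
          intro j
          show U j.1 t - U i t = ξd j + (W j.1 t - W i t)
          rw [hWdiff i j.1 t, hξdj j]
          ring
        set pc : ↥(V i) → ℝ := fun j => min (p j) (u j) with hpc
        have hpcval : ∀ j : ↥(V i), pc j = min (p j) (u j) := fun j => by rw [hpc]
        have hpcS : pc ∈ S i := by
          intro j _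
          show pc j ∈ Icc (ξ j.1 - ξ i - B) (ξ j.1 - ξ i + B)
          rw [hpcval j, mem_Icc, ← hξdj j]
          exact ⟨le_min (hpbox j).1 (hul j), le_trans (min_le_left _ _) (hpbox j).2⟩
        have hpcG : pc ∈ G := by
          intro j _
          show pc j ∈ Icc (ξd j - B) (u j)
          rw [hpcval j, mem_Icc]
          exact ⟨le_min (hpbox j).1 (hul j), min_le_right _ _⟩
        have hHmax : H i pc ≤ H i pstar := hpmax hpcG
        have hgoal : H i p - γ ≤ -(δ/2) → (H i fun j => U j.1 t - U i t) - γ ≤ -(δ/2) := by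
          rw [hp]
          exact id
        apply hgoal
        clear_value p
        have hdistj : ∀ j : ↥(V i), |p j - pc j| ≤ σ + η := by
          intro j
          rw [hpcval j]
          have hub : p j - min (p j) (u j) ≤ σ + η := by
            rcases min_cases (p j) (u j) with ⟨h1, _⟩ | ⟨h1, _⟩
            · rw [h1]
              simp only [sub_self]
              linarith
            · rw [h1]
              by_cases hk : j = k
              · subst hk
                rw [huk, hpj j]
                linarith [hWk]
              · rw [hune j hk, hpj j]
                linarith [hWj j.1]
          have hlb : 0 ≤ p j - min (p j) (u j) := by
            have := min_le_left (p j) (u j)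
            linarith
          rw [abs_le]
          constructor <;> linarith
        clear_value pc
        have hdist : dist p pc ≤ σ + η := by
          rw [dist_pi_le_iff (by linarith)]
          intro j
          rw [Real.dist_eq]
          exact hdistj j
        have hclose : |H i p - H i pc| < δ/2 := by
          have := hUCθ p hpS pc hpcS (lt_of_le_of_lt hdist (by linarith))
          rw [Real.dist_eq] at this
          exact this
        have habs := (abs_lt.mp hclose).2
        rw [hγi]
        have hδeq : H i pstar = H i ξd - δ := by rw [hδdef]; ring
        linarith
      by_cases hP : Nonempty ((i : Fin N) × ↥(V i))
      · haveI := hP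
        choose δf hδf θf hθf hkeyf using pair
        set δ : ℝ := Finset.univ.inf' Finset.univ_nonempty
          (fun p : (i : Fin N) × ↥(V i) => δf p.1 p.2) with hδdef
        set θ : ℝ := Finset.univ.inf' Finset.univ_nonempty
          (fun p : (i : Fin N) × ↥(V i) => θf p.1 p.2) with hθdef
        have hδ0 : 0 < δ := by
          rw [hδdef, Finset.lt_inf'_iff]
          exact fun p _ => hδf p.1 p.2
        have hθ0 : 0 < θ := by
          rw [hθdef, Finset.lt_inf'_iff]
          exact fun p _ => hθf p.1 p.2
        have hδle : ∀ (i : Fin N) (k : ↥(V i)), δ ≤ δf i k := by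
          intro i k
          rw [hδdef]
          exact Finset.inf'_le _ (Finset.mem_univ (⟨i, k⟩ : (i : Fin N) × ↥(V i)))
        have hθle : ∀ (i : Fin N) (k : ↥(V i)), θ ≤ θf i k := by
          intro i k
          rw [hθdef]
          exact Finset.inf'_le _ (Finset.mem_univ (⟨i, k⟩ : (i : Fin N) × ↥(V i)))
        clear_value δ θ
        set η : ℝ := min (ε/2) (min (θ/4) (δ * ρ' / 16)) with hηdef
        have hη0 : 0 < η := by
          rw [hηdef]
          exact lt_min (by linarith) (lt_min (by linarith)
            (div_pos (mul_pos hδ0 hρ'pos) (by norm_num)))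
        have hηε2 : η ≤ ε/2 := by rw [hηdef]; exact min_le_left _ _
        have hησ4 : η ≤ θ/4 := by
          rw [hηdef]
          exact le_trans (min_le_right _ _) (min_le_left _ _)
        have hηδρ : η ≤ δ * ρ' / 16 := by
          rw [hηdef]
          exact le_trans (min_le_right _ _) (min_le_right _ _)
        clear_value η
        refine ⟨η, hη0, hηε2, η, hη0, ?_⟩
        intro σ hσ0 hσle i k a b ha hWk hWj t ht
        have haρb : a + ρ' ≤ b := le_trans ht.1 ht.2
        have hδik : δ ≤ δf i k := hδle i k
        have hθik : θ ≤ θf i k := hθle i k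
        have hδik0 : 0 < δf i k := hδf i k
        have hder : ∀ s ∈ Icc a b, qinf - η ≤ W i s → D i s ≤ -(δf i k/2) := by
          intro s hs hWis
          refine hkeyf i k s (le_trans ha hs.1) η σ hη0 hηε2 hσ0 ?_
            (hWk s hs) (hWj s hs) hWis
          linarith
        set r : ℝ := 4*(σ+η)/(δf i k) with hrdef
        have hr0 : 0 < r := by
          rw [hrdef]
          exact div_pos (by linarith) hδik0
        have hcalc : (δf i k/2) * r = 2*(σ+η) := by
          rw [hrdef]
          field_simp
          ring
        clear_value r
        have hrρ' : r ≤ ρ' := by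
          nlinarith [mul_le_mul_of_nonneg_right hδik hρ'pos.le, hcalc, hδik0, hr0]
        have hdip : ∃ t₁ ∈ Icc a (a + r), W i t₁ ≤ qinf - η := by
          by_contra hcon
          push_neg at hcon
          have hbnd : ∀ s ∈ Icc a (a + r), D i s ≤ -(δf i k/2) := by
            intro s hs
            exact hder s ⟨hs.1, le_trans hs.2 (by linarith)⟩ (le_of_lt (hcon s hs))
          have hgr := growth (W i) (D i) a (a + r) (-(δf i k/2)) ha
            (fun s hs => hWd i s (le_trans ha hs.1)) hbnd (a + r) ⟨by linarith, le_refl _⟩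
          have hWa : W i a ≤ qinf + σ := hWj a ⟨le_refl a, by linarith⟩ i
          have hfin : W i (a+r) ≤ qinf - η := by nlinarith [hgr, hWa, hcalc]
          exact absurd hfin (not_le.mpr (hcon (a+r) ⟨by linarith, le_refl _⟩))
        obtain ⟨t₁, ht₁, hWt₁⟩ := hdip
        have ht₁0 : 0 ≤ t₁ := le_trans ha ht₁.1
        have hstay := stay_below (W i) (D i) t₁ b (qinf - η) ht₁0
          (fun s hs => hWd i s (le_trans ht₁0 hs.1))
          hWt₁
          (fun s hs hle => lt_of_le_of_lt
            (hder s ⟨le_trans ht₁.1 hs.1, hs.2⟩ hle) (by linarith [hδik0]))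
        exact hstay t ⟨le_trans ht₁.2 (le_trans (by linarith) ht.1), ht.2⟩
      · refine ⟨ε/2, by linarith, le_refl _, 1, one_pos, ?_⟩
        intro σ _ _ i k
        exact absurd ⟨⟨i, k⟩⟩ hP
    -- the spreading sets
    classical
    obtain ⟨Tf, hTf0, hTfs⟩ : ∃ Tf : Fin N → ℕ → Finset (Fin N),
        (∀ j₀, Tf j₀ 0 = {j₀}) ∧
        (∀ j₀ d, Tf j₀ (d+1) =
          Tf j₀ d ∪ Finset.univ.filter (fun i => ∃ k ∈ V i, k ∈ Tf j₀ d)) :=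
      ⟨fun j₀ d => Nat.rec {j₀}
        (fun _ Td => Td ∪ Finset.univ.filter (fun i => ∃ k ∈ V i, k ∈ Td)) d,
        fun _ => rfl, fun _ _ => rfl⟩
    have hTmono : ∀ j₀ d, Tf j₀ d ⊆ Tf j₀ (d+1) := by
      intro j₀ d
      rw [hTfs]
      exact Finset.subset_union_left
    have hTmono' : ∀ j₀ d e, d ≤ e → Tf j₀ d ⊆ Tf j₀ e := by
      intro j₀ d e hde
      induction hde with
      | refl => exact Finset.Subset.refl _
      | step _ ih => exact Finset.Subset.trans ih (hTmono j₀ _)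
    have hTfull : ∀ j₀, Tf j₀ N = Finset.univ := by
      intro j₀
      have hcard : ∀ d : ℕ, (∀ e, e < d → Tf j₀ (e+1) ≠ Tf j₀ e) → d + 1 ≤ (Tf j₀ d).card := by
        intro d
        induction d with
        | zero =>
          intro _
          rw [hTf0]
          simp
        | succ n ih =>
          intro hne
          have h1 : n + 1 ≤ (Tf j₀ n).card := ih (fun e he => hne e (Nat.lt_succ_of_lt he))
          have h3 : Tf j₀ n ≠ Tf j₀ (n+1) := fun h => hne n (Nat.lt_succ_self n) h.symm
          have h4 : Tf j₀ n ⊂ Tf j₀ (n+1) := ssubset_of_subset_of_ne (hTmono j₀ n) h3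
          have := Finset.card_lt_card h4
          omega
      have hstab : ∃ d, d < N ∧ Tf j₀ (d+1) = Tf j₀ d := by
        by_contra hc
        push_neg at hc
        have h1 := hcard N (fun e he => hc e he)
        have h2 : (Tf j₀ N).card ≤ N := by
          have := Finset.card_le_card (Finset.subset_univ (Tf j₀ N))
          simpa using this
        omega
      obtain ⟨d₀, hd₀N, hd₀⟩ := hstab
      have hclosed : ∀ i : Fin N, (∃ k ∈ V i, k ∈ Tf j₀ d₀) → i ∈ Tf j₀ d₀ := by
        intro i hex
        rw [← hd₀, hTfs]
        apply Finset.mem_union_right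
        rw [Finset.mem_filter]
        exact ⟨Finset.mem_univ i, hex⟩
      have hj₀mem : j₀ ∈ Tf j₀ d₀ :=
        hTmono' j₀ 0 d₀ (Nat.zero_le _) (by rw [hTf0]; exact Finset.mem_singleton_self j₀)
      have hall : ∀ i : Fin N, i ∈ Tf j₀ d₀ := by
        intro i
        refine Relation.ReflTransGen.head_induction_on (hconn i j₀) hj₀mem ?_
        intro a c hac _ hc
        exact hclosed a ⟨c, hac, hc⟩
      apply Finset.eq_univ_of_forall
      intro i
      exact hTmono' j₀ d₀ N (le_of_lt hd₀N) (hall i)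
    -- the propagation claim, by induction on d
    have CLAIM : ∀ d : ℕ, ∃ ε' : ℝ, 0 < ε' ∧ ε' ≤ 1 ∧ ∃ σ' : ℝ, 0 < σ' ∧
        ∀ σ : ℝ, 0 < σ → σ ≤ σ' → ∀ t : ℝ, 0 ≤ t →
        (∀ s ∈ Icc t (t+ρ), ∀ j, W j s ≤ qinf + σ) →
        ∀ j₀ : Fin N, W j₀ t ≤ minf →
        ∀ i ∈ Tf j₀ d, ∀ s ∈ Icc (t + (d:ℝ)*ρ') (t + ρ), W i s ≤ qinf - ε' := by
      intro d
      induction d with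
      | zero =>
        refine ⟨ε₀, hε₀, hε₀1, 1, one_pos, ?_⟩
        intro σ hσ0 hσ1 t ht hsmall j₀ hj₀ i hi s hs
        rw [hTf0, Finset.mem_singleton] at hi
        subst hi
        have hs' : s ∈ Icc t (t + ρ) := by
          constructor
          · have h1 := hs.1
            push_cast at h1
            linarith
          · exact hs.2
        have hgr := growth (W i) (D i) t (t+ρ) C ht
          (fun v hv => hWd i v (le_trans ht hv.1))
          (fun v hv => hCb i v (le_trans ht hv.1)) s hs'
        have hsρ : s - t ≤ ρ := by linarith [hs'.2]
        have hCst : C * (s - t) ≤ C * ρ := mul_le_mul_of_nonneg_left hsρ (le_of_lt hC0)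
        linarith [hgr, hj₀, hCst, hCρ, hm2ε]
      | succ d ih =>
        obtain ⟨ε', hε'0, hε'1, σ', hσ'0, hmain⟩ := ih
        obtain ⟨η, hη0, hηε, σ₀, hσ₀0, hprop⟩ := prop1 ε' hε'0 hε'1
        refine ⟨η, hη0, le_trans hηε (by linarith), min σ' σ₀, lt_min hσ'0 hσ₀0, ?_⟩
        intro σ hσ0 hσle t ht hsmall j₀ hj₀ i hi s hs
        have hσ'le : σ ≤ σ' := le_trans hσle (min_le_left _ _)
        have hσ₀le : σ ≤ σ₀ := le_trans hσle (min_le_right _ _)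
        have IH := hmain σ hσ0 hσ'le t ht hsmall j₀ hj₀
        have hdρ'0 : 0 ≤ (d:ℝ)*ρ' := mul_nonneg (Nat.cast_nonneg d) hρ'pos.le
        rw [hTfs] at hi
        rcases Finset.mem_union.mp hi with hi | hi
        · have hsub : s ∈ Icc (t + (d:ℝ)*ρ') (t + ρ) := by
            constructor
            · have h1 := hs.1
              push_cast at h1
              linarith
            · exact hs.2
          have := IH i hi s hsub
          linarith
        · rw [Finset.mem_filter] at hi
          obtain ⟨-, k, hkV, hkT⟩ := hi
          have happ := hprop σ hσ0 hσ₀le i ⟨k, hkV⟩ (t + (d:ℝ)*ρ') (t + ρ)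
            (by linarith)
            (fun v hv => IH k hkT v hv)
            (fun v hv j => hsmall v ⟨by linarith [hv.1], hv.2⟩ j)
          refine happ s ?_
          constructor
          · have h1 := hs.1
            push_cast at h1
            linarith
          · exact hs.2
    -- final contradiction
    obtain ⟨ε', hε'0, hε'1, σ', hσ'0, hmain⟩ := CLAIM N
    obtain ⟨T₁, hT₁0, hT₁⟩ := hqtend σ' hσ'0
    obtain ⟨t, ht0, htT₁⟩ : ∃ t : ℝ, 0 ≤ t ∧ T₁ ≤ t :=
      ⟨max T₁ 0, le_max_right _ _, le_max_left _ _⟩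
    have hsmall : ∀ s ∈ Icc t (t+ρ), ∀ j, W j s ≤ qinf + σ' := fun s hs j =>
      le_trans (hqub s j) (hT₁ s (le_trans htT₁ hs.1))
    obtain ⟨j₀, hj₀⟩ := hmex t
    have hj₀' : W j₀ t ≤ minf := by
      rw [← hj₀]
      exact hm_le t ht0
    have hconc := hmain σ' hσ'0 (le_refl _) t ht0 hsmall j₀ hj₀'
    obtain ⟨i₂, hi₂⟩ := hqex (t+ρ)
    have hi₂mem : i₂ ∈ Tf j₀ N := by
      rw [hTfull j₀]
      exact Finset.mem_univ i₂
    have hend : (t+ρ) ∈ Icc (t + (N:ℝ)*ρ') (t + ρ) := by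
      constructor
      · linarith [hNρ']
      · exact le_refl _
    have hfinal := hconc i₂ hi₂mem (t+ρ) hend
    rw [hi₂] at hfinal
    have hq1 : qinf ≤ q (t+ρ) := hqinf_le (t+ρ) (by linarith)
    linarith
  -- conclusion
  push_neg at KEY
  intro i
  rw [Metric.tendsto_atTop]
  intro ε hε
  obtain ⟨T₁, hT₁0, hT₁⟩ := hqtend (ε/2) (by linarith)
  obtain ⟨y, ⟨s₀, hs₀0, rfl⟩, hy⟩ := exists_lt_of_lt_csSup hmne (by rw [← hminf]; linarith : minf - ε/2 < sSup (m '' Ici 0))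
  refine ⟨max T₁ s₀, fun t ht => ?_⟩
  have ht1 : T₁ ≤ t := le_trans (le_max_left _ _) ht
  have ht2 : s₀ ≤ t := le_trans (le_max_right _ _) ht
  have ht0 : 0 ≤ t := le_trans hT₁0 ht1
  have hup : W i t ≤ qinf + ε/2 := le_trans (hqub t i) (hT₁ t ht1)
  have hdown : qinf - ε/2 < W i t := by
    have h1 : m s₀ ≤ m t := mmono s₀ t hs₀0 ht2
    have h2 := hmlb t i
    have h3 : qinf - ε/2 < m s₀ := lt_of_le_of_lt (by linarith only [KEY, hε]) hy
    exact lt_of_lt_of_le h3 (le_trans h1 h2)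
  have : dist (U i t - γ * t) (ξ i + qinf) = |W i t - qinf| := by
    rw [Real.dist_eq]
    congr 1
    simp [hW]
    ring
  rw [this, abs_lt]
  have hε2 : ε/2 < ε := by linarith only [hε]
  constructor
  · have : qinf - ε < qinf - ε/2 := by linarith only [hε2]
    have h4 : qinf - ε < W i t := lt_trans this hdown
    linarith only [h4]
  · have h5 : W i t < qinf + ε := lt_of_le_of_lt hup (by linarith only [hε2])
    linarith only [h5]
end
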